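/- arXiv:2512.19278 — 13 statements merged into one kernel-verified Lean document; each statement's English description precedes it below -/
import Mathlib

section
/- For every integer n > 3 there exists an odd-regular open XOR-magic graph of power n; that is, there exist an odd positive integer k and a connected k-regular simple graph G on 2^n vertices together with a bijection ℓ from V(G) to (Z_2)^n such that for every vertex v the sum in (Z_2)^n of ℓ(u) over all neighbors u of v is the zero vector. -/
namespace XorMagic


theorem xmagic {X : Type} [AddCommGroup X] [Fintype X] [DecidableEq X]
    (n r : ℕ) (hr : Even r) (hsmall : 2 * r + 2 < 2 ^ n)
    (eX : X ≃+ (Fin n → ZMod 2))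
    (hall : (∑ x : X, x) = 0)
    (Nbad : X → Finset X)
    (hcard : ∀ v, (Nbad v).card = r)
    (hsym : ∀ u v, u ∈ Nbad v ↔ v ∈ Nbad u)
    (hirr : ∀ v, v ∉ Nbad v)
    (hsum : ∀ v, (∑ u ∈ Nbad v, u) = v) :
    ∃ (k : ℕ) (G : SimpleGraph (Fin (2 ^ n))),
      Odd k ∧ 0 < k ∧
      (∀ v, (G.neighborSet v).ncard = k) ∧
      G.Connected ∧
      ∃ ℓ : Fin (2 ^ n) ≃ (Fin n → ZMod 2),
        ∀ v, ∑ᶠ u ∈ G.neighborSet v, ℓ u = 0 := by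
  classical
  have hcardX : Fintype.card X = 2 ^ n := by
    have := Fintype.card_congr eX.toEquiv
    simpa [Fintype.card_fun] using this
  have hcardF : Fintype.card (Fin (2 ^ n)) = Fintype.card X := by
    simp [hcardX]
  let lam : Fin (2 ^ n) ≃ X := Fintype.equivOfCardEq hcardF
  -- the graph
  let G : SimpleGraph (Fin (2 ^ n)) :=
    { Adj := fun i j => i ≠ j ∧ lam i ∉ Nbad (lam j)
      symm := by
        refine ⟨?_⟩; rintro i j ⟨hne, hnb⟩
        exact ⟨hne.symm, fun hc => hnb ((hsym (lam j) (lam i)).mp hc)⟩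
      loopless := by refine ⟨?_⟩; rintro i ⟨hne, -⟩; exact hne rfl }
  have hadj : ∀ i j, G.Adj i j ↔ (i ≠ j ∧ lam i ∉ Nbad (lam j)) := fun _ _ => Iff.rfl
  -- neighbor finset description
  have hnb : ∀ i, G.neighborFinset i =
      Finset.univ \ insert i ((Nbad (lam i)).image lam.symm) := by
    intro i
    ext u
    simp only [SimpleGraph.mem_neighborFinset, Finset.mem_sdiff, Finset.mem_univ,
      Finset.mem_insert, Finset.mem_image, true_and]
    constructor
    · rintro ⟨hne, hnb'⟩
      push_neg
      refine ⟨fun h => hne h.symm, ?_⟩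
      rintro x hx rfl
      have hx' : lam (lam.symm x) ∈ Nbad (lam i) := by simpa using hx
      exact hnb' ((hsym _ _).mp hx')
    · intro h
      push_neg at h
      obtain ⟨h1, h2⟩ := h
      refine ⟨fun hh => h1 hh.symm, fun hc => ?_⟩
      exact h2 (lam u) ((hsym _ _).mp hc) (by simp)
  -- cardinal facts
  have hn1 : 1 ≤ n := by
    by_contra h
    push_neg at h
    interval_cases n <;> omega
  have hcardBad : ∀ i, (insert i ((Nbad (lam i)).image lam.symm)).card = r + 1 := by
    intro i
    rw [Finset.card_insert_of_notMem, Finset.card_image_of_injective _ lam.symm.injective,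
      hcard]
    intro hmem
    obtain ⟨x, hx, hx'⟩ := Finset.mem_image.mp hmem
    apply hirr (lam i)
    have : x = lam i := by
      have := congrArg lam hx'
      simpa using this
    rwa [this] at hx
  have hdeg : ∀ i, (G.neighborFinset i).card = 2 ^ n - (r + 1) := by
    intro i
    rw [hnb i, Finset.card_sdiff_of_subset (Finset.subset_univ _), hcardBad i]
    simp
  refine ⟨2 ^ n - (r + 1), G, ?_, ?_, ?_, ?_, ?_⟩
  · -- Odd
    obtain ⟨s, hs⟩ := hr
    have h2n : 2 ^ n = 2 * 2 ^ (n - 1) := by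
      rw [← pow_succ']
      congr 1
      omega
    refine ⟨2 ^ (n-1) - s - 1, by omega⟩
  · omega
  · intro v
    have : G.neighborSet v = ↑(G.neighborFinset v) := by
      simp [SimpleGraph.neighborFinset]
    rw [this, Set.ncard_coe_finset, hdeg]
  · -- connectivity
    haveI hne' : Nonempty (Fin (2 ^ n)) := by
      refine ⟨⟨0, ?_⟩⟩
      positivity
    constructor
    · intro i j
      by_cases hij : i = j
      · exact hij ▸ SimpleGraph.Reachable.refl i
      · set T : Finset X := insert (lam i) (insert (lam j) (Nbad (lam i) ∪ Nbad (lam j)))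
          with hTdef
        have hT : T.card < Fintype.card X := by
          have h1 : T.card ≤ 1 + (1 + (Nbad (lam i) ∪ Nbad (lam j)).card) := by
            refine le_trans (Finset.card_insert_le _ _) ?_
            have := Finset.card_insert_le (lam j) (Nbad (lam i) ∪ Nbad (lam j))
            omega
          have h2 : (Nbad (lam i) ∪ Nbad (lam j)).card ≤ r + r := by
            refine le_trans (Finset.card_union_le _ _) ?_
            rw [hcard, hcard]
          rw [hcardX]
          omega
        have hEx : (Finset.univ \ T).Nonempty := by
          rw [← Finset.card_pos, Finset.card_sdiff_of_subset (Finset.subset_univ _)]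
          have := Finset.card_univ (α := X)
          omega
        obtain ⟨w, hw⟩ := hEx
        rw [Finset.mem_sdiff, hTdef] at hw
        simp only [Finset.mem_insert, Finset.mem_union, not_or, Finset.mem_univ,
          true_and] at hw
        obtain ⟨hw1, hw2, hw3, hw4⟩ := hw
        set u := lam.symm w with hu
        have hlu : lam u = w := by simp [hu]
        have a1 : G.Adj i u := by
          rw [hadj]
          constructor
          · intro hcon
            exact hw1 (by rw [← hlu, hcon])
          · rw [hlu]
            intro hcon
            exact hw3 ((hsym _ _).mp hcon)
        have a2 : G.Adj u j := by
          rw [hadj, hlu]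
          constructor
          · intro hcon
            apply hw2
            rw [← hlu, hcon]
          · exact hw4
        exact (a1.reachable).trans a2.reachable
  · -- the labeling and the sums
    refine ⟨lam.trans eX.toEquiv, ?_⟩
    intro v
    have hset : G.neighborSet v = ↑(G.neighborFinset v) := by
      simp [SimpleGraph.neighborFinset]
    rw [hset, finsum_mem_coe_finset, hnb v,
      Finset.sum_sdiff_eq_sub (Finset.subset_univ _)]
    have hchar2 : ∀ y : Fin n → ZMod 2, y + y = 0 := by
      intro y
      funext t
      simp only [Pi.add_apply, Pi.zero_apply]
      exact CharTwo.add_self_eq_zero (y t)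
    have huniv : (∑ u : Fin (2 ^ n), eX (lam u)) = 0 := by
      rw [Fintype.sum_equiv lam (fun u => eX (lam u)) (fun x => eX x) (fun u => rfl)]
      rw [← map_sum, hall, map_zero]
    have hbad : (∑ u ∈ insert v ((Nbad (lam v)).image lam.symm),
        eX (lam u)) = 0 := by
      rw [Finset.sum_insert, Finset.sum_image]
      · have : (∑ x ∈ Nbad (lam v), eX (lam (lam.symm x)))
            = ∑ x ∈ Nbad (lam v), eX x := by
          apply Finset.sum_congr rfl
          intro x _
          simp
        rw [this, ← map_sum, hsum, ← map_add]
        rw [show lam v + lam v = 0 from ?_, map_zero]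
        · have h2 : ∀ x : X, x + x = 0 := by
            intro x
            have := map_add eX x x
            have h0 : eX (x + x) = 0 := by rw [this, hchar2]
            have := eX.injective
            apply this
            rw [h0, map_zero]
          exact h2 (lam v)
      · intro x _ y _ hxy
        exact lam.symm.injective hxy
      · intro hmem
        obtain ⟨x, hx, hx'⟩ := Finset.mem_image.mp hmem
        apply hirr (lam v)
        have hxv : x = lam v := by
          have := congrArg lam hx'
          simpa using this
        rwa [hxv] at hx
    simp only [Equiv.trans_apply, AddEquiv.toEquiv_eq_coe, Equiv.coe_fn_mk,
      EquivLike.coe_coe]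
    rw [huniv, hbad, sub_zero]



def M2 : (ZMod 2 × ZMod 2) → (ZMod 2 × ZMod 2) := fun v => (v.2, v.1 + v.2)
def M2i : (ZMod 2 × ZMod 2) → (ZMod 2 × ZMod 2) := fun v => (v.1 + v.2, v.1)

lemma hM1 : ∀ w, M2i (M2 w) = w := by decide
lemma hM2 : ∀ w, M2 (M2i w) = w := by decide
lemma hM3 : ∀ w, M2 w + M2i w + w + w = w := by decide

lemma char2 {Y : Type*} [AddCommGroup Y] [Module (ZMod 2) Y] (z : Y) : z + z = 0 := by
  have h := two_smul (ZMod 2) z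
  have h2 : (2 : ZMod 2) = 0 := by decide
  rw [h2, zero_smul] at h
  exact h.symm

lemma sum_prod_zero {P R : Type} [AddCommGroup P] [AddCommGroup R]
    [Fintype P] [Fintype R] [Module (ZMod 2) P] [Module (ZMod 2) R]
    (hallP : (∑ p : P, p) = 0) (hPeven : Even (Fintype.card P)) :
    (∑ x : P × R, x) = 0 := by
  have h1 : (∑ x : P × R, x).1 = 0 := by
    rw [Prod.fst_sum]
    rw [Fintype.sum_prod_type (f := fun x : P × R => x.1)]
    simp only [Finset.sum_const, Finset.card_univ]
    rw [← Finset.smul_sum, hallP, smul_zero]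
  have h2 : (∑ x : P × R, x).2 = 0 := by
    rw [Prod.snd_sum]
    rw [Fintype.sum_prod_type (f := fun x : P × R => x.2)]
    simp only [Finset.sum_const, Finset.card_univ]
    obtain ⟨t, ht⟩ := hPeven
    rw [ht, add_nsmul]
    have : (t • ∑ q : R, q) + (t • ∑ q : R, q) = 0 := char2 _
    exact this
  exact Prod.ext h1 h2


theorem xmagic_block {P : Type} [AddCommGroup P] [Fintype P] [DecidableEq P]
    [Module (ZMod 2) P]
    (fA fAi gB gBi : P → P)
    (hA1 : ∀ p, fAi (fA p) = p) (hA2 : ∀ p, fA (fAi p) = p)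
    (hB1 : ∀ p, gBi (gB p) = p) (hB2 : ∀ p, gB (gBi p) = p)
    (hsumP : ∀ p, fA p + fAi p + gB p + gBi p = p)
    (hdist : ∀ p : P, p ≠ fA p ∧ p ≠ fAi p ∧ p ≠ gB p ∧ p ≠ gBi p ∧
      fA p ≠ fAi p ∧ fA p ≠ gB p ∧ fA p ≠ gBi p ∧ fAi p ≠ gB p ∧
      fAi p ≠ gBi p ∧ gB p ≠ gBi p)
    (hallP : (∑ p : P, p) = 0) (hPeven : Even (Fintype.card P))
    (m n : ℕ) (hn : Module.finrank (ZMod 2) P + 2 * m = n)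
    (hsm : 2 * 4 + 2 < 2 ^ n) :
    ∃ (k : ℕ) (G : SimpleGraph (Fin (2 ^ n))),
      Odd k ∧ 0 < k ∧
      (∀ v, (G.neighborSet v).ncard = k) ∧
      G.Connected ∧
      ∃ ℓ : Fin (2 ^ n) ≃ (Fin n → ZMod 2),
        ∀ v, ∑ᶠ u ∈ G.neighborSet v, ℓ u = 0 := by
  classical
  -- the four permutations
  set F : (P × (Fin m → ZMod 2 × ZMod 2)) → (P × (Fin m → ZMod 2 × ZMod 2)) := fun x => (fA x.1, fun i => M2 (x.2 i)) with hF
  set Fi : (P × (Fin m → ZMod 2 × ZMod 2)) → (P × (Fin m → ZMod 2 × ZMod 2)) := fun x => (fAi x.1, fun i => M2i (x.2 i)) with hFi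
  set Gm : (P × (Fin m → ZMod 2 × ZMod 2)) → (P × (Fin m → ZMod 2 × ZMod 2)) := fun x => (gB x.1, x.2) with hGm
  set Gmi : (P × (Fin m → ZMod 2 × ZMod 2)) → (P × (Fin m → ZMod 2 × ZMod 2)) := fun x => (gBi x.1, x.2) with hGmi
  have hFinv1 : ∀ x, Fi (F x) = x := by
    intro x
    simp only [hF, hFi, hA1]
    exact Prod.ext rfl (funext fun i => hM1 _)
  have hFinv2 : ∀ x, F (Fi x) = x := by
    intro x
    simp only [hF, hFi, hA2]
    exact Prod.ext rfl (funext fun i => hM2 _)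
  have hGinv1 : ∀ x, Gmi (Gm x) = x := by
    intro x
    simp only [hGm, hGmi, hB1]
  have hGinv2 : ∀ x, Gm (Gmi x) = x := by
    intro x
    simp only [hGm, hGmi, hB2]
  -- distinctness via first components
  have hd : ∀ x : P × (Fin m → ZMod 2 × ZMod 2), x ≠ F x ∧ x ≠ Fi x ∧ x ≠ Gm x ∧ x ≠ Gmi x ∧
      F x ≠ Fi x ∧ F x ≠ Gm x ∧ F x ≠ Gmi x ∧ Fi x ≠ Gm x ∧
      Fi x ≠ Gmi x ∧ Gm x ≠ Gmi x := by
    intro x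
    obtain ⟨d1,d2,d3,d4,d5,d6,d7,d8,d9,d10⟩ := hdist x.1
    refine ⟨?_,?_,?_,?_,?_,?_,?_,?_,?_,?_⟩ <;>
      (intro hcon; first
        | exact d1 (congrArg Prod.fst hcon)
        | exact d2 (congrArg Prod.fst hcon)
        | exact d3 (congrArg Prod.fst hcon)
        | exact d4 (congrArg Prod.fst hcon)
        | exact d5 (congrArg Prod.fst hcon)
        | exact d6 (congrArg Prod.fst hcon)
        | exact d7 (congrArg Prod.fst hcon)
        | exact d8 (congrArg Prod.fst hcon)
        | exact d9 (congrArg Prod.fst hcon)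
        | exact d10 (congrArg Prod.fst hcon))
  -- Nbad
  set Nbad : (P × (Fin m → ZMod 2 × ZMod 2)) → Finset (P × (Fin m → ZMod 2 × ZMod 2)) := fun x => {F x, Fi x, Gm x, Gmi x} with hNbad
  have hmem : ∀ u v : P × (Fin m → ZMod 2 × ZMod 2), u ∈ Nbad v ↔ (u = F v ∨ u = Fi v ∨ u = Gm v ∨ u = Gmi v) := by
    intro u v
    simp [hNbad]
  have hcard : ∀ v : P × (Fin m → ZMod 2 × ZMod 2), (Nbad v).card = 4 := by
    intro v
    obtain ⟨-,-,-,-,d5,d6,d7,d8,d9,d10⟩ := hd v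
    rw [hNbad]
    rw [Finset.card_insert_of_notMem (by simp [d5, d6, d7]),
      Finset.card_insert_of_notMem (by simp [d8, d9]),
      Finset.card_insert_of_notMem (by simp [d10])]
    simp
  have hsym : ∀ u v : P × (Fin m → ZMod 2 × ZMod 2), u ∈ Nbad v ↔ v ∈ Nbad u := by
    have key : ∀ u v : P × (Fin m → ZMod 2 × ZMod 2), u ∈ Nbad v → v ∈ Nbad u := by
      intro u v h
      rw [hmem] at h
      rcases h with h | h | h | h
      · rw [hmem]; right; left; rw [h, hFinv1]
      · rw [hmem]; left; rw [h, hFinv2]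
      · rw [hmem]; right; right; right; rw [h, hGinv1]
      · rw [hmem]; right; right; left; rw [h, hGinv2]
    intro u v
    exact ⟨key u v, key v u⟩
  have hirr : ∀ v : P × (Fin m → ZMod 2 × ZMod 2), v ∉ Nbad v := by
    intro v h
    obtain ⟨d1,d2,d3,d4,-⟩ := hd v
    rw [hmem] at h
    rcases h with h | h | h | h
    exacts [d1 h, d2 h, d3 h, d4 h]
  have hsum : ∀ v : P × (Fin m → ZMod 2 × ZMod 2), (∑ u ∈ Nbad v, u) = v := by
    intro v
    obtain ⟨-,-,-,-,d5,d6,d7,d8,d9,d10⟩ := hd v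
    rw [hNbad]
    rw [Finset.sum_insert (by simp [d5, d6, d7]),
      Finset.sum_insert (by simp [d8, d9]),
      Finset.sum_insert (by simp [d10]), Finset.sum_singleton]
    refine Prod.ext ?_ ?_
    · show (F v).1 + ((Fi v).1 + ((Gm v).1 + (Gmi v).1)) = v.1
      simp only [hF, hFi, hGm, hGmi]
      rw [← add_assoc, ← add_assoc]
      exact hsumP v.1
    · funext i
      show ((F v).2 + ((Fi v).2 + ((Gm v).2 + (Gmi v).2))) i = v.2 i
      simp only [hF, hFi, hGm, hGmi, Pi.add_apply]
      rw [← add_assoc, ← add_assoc]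
      exact hM3 (v.2 i)
  -- the additive equivalence
  have hfrX : Module.finrank (ZMod 2) (P × (Fin m → ZMod 2 × ZMod 2)) = n := by
    rw [Module.finrank_prod, Module.finrank_pi_fintype]
    have h2 : Module.finrank (ZMod 2) (ZMod 2 × ZMod 2) = 2 := by
      rw [Module.finrank_prod, Module.finrank_self]
    simp only [h2, Finset.sum_const, Finset.card_univ, Fintype.card_fin, smul_eq_mul]
    omega
  have hfrL : Module.finrank (ZMod 2) (Fin n → ZMod 2) = n := by
    simp [Module.finrank_fintype_fun_eq_card]
  have heq : Module.finrank (ZMod 2) (P × (Fin m → ZMod 2 × ZMod 2))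
      = Module.finrank (ZMod 2) (Fin n → ZMod 2) := by
    rw [hfrX, hfrL]
  let eL : (P × (Fin m → ZMod 2 × ZMod 2)) ≃ₗ[ZMod 2] (Fin n → ZMod 2) :=
    LinearEquiv.ofFinrankEq _ _ heq
  have hall : (∑ x : P × (Fin m → ZMod 2 × ZMod 2), x) = 0 := sum_prod_zero hallP hPeven
  exact xmagic n 4 (by decide) hsm (eL.toAddEquiv) hall Nbad hcard hsym hirr hsum




-- designated 4-dim block
def fA : (Fin 4 → ZMod 2) → (Fin 4 → ZMod 2) := fun p => ![p 0 + p 3 + 1, p 2, p 1 + 1, p 0]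
def fAi : (Fin 4 → ZMod 2) → (Fin 4 → ZMod 2) := fun p => ![p 3, p 2 + 1, p 1, p 0 + p 3 + 1]
def gB : (Fin 4 → ZMod 2) → (Fin 4 → ZMod 2) := fun p => ![p 3 + 1, p 1 + p 2 + 1, p 1, p 0]
def gBi : (Fin 4 → ZMod 2) → (Fin 4 → ZMod 2) := fun p => ![p 3, p 2, p 1 + p 2 + 1, p 0 + 1]

lemma hA1 : ∀ p, fAi (fA p) = p := by decide
lemma hA2 : ∀ p, fA (fAi p) = p := by decide
lemma hB1 : ∀ p, gBi (gB p) = p := by decide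
lemma hB2 : ∀ p, gB (gBi p) = p := by decide
lemma hsumP : ∀ p, fA p + fAi p + gB p + gBi p = p := by decide
lemma hdist : ∀ p : Fin 4 → ZMod 2, p ≠ fA p ∧ p ≠ fAi p ∧ p ≠ gB p ∧ p ≠ gBi p ∧
      fA p ≠ fAi p ∧ fA p ≠ gB p ∧ fA p ≠ gBi p ∧ fAi p ≠ gB p ∧
      fAi p ≠ gBi p ∧ gB p ≠ gBi p := by decide
lemma hallP : (∑ p : Fin 4 → ZMod 2, p) = 0 := by decide

-- 3-dim nonlinear filler
def dec3 : ℕ → (Fin 3 → ZMod 2) := fun k => ![(k : ZMod 2), ((k/2 : ℕ) : ZMod 2), ((k/4 : ℕ) : ZMod 2)]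
def enc3 : (Fin 3 → ZMod 2) → ℕ := fun q => (q 0).val + 2*(q 1).val + 4*(q 2).val
def F3 : (Fin 3 → ZMod 2) → (Fin 3 → ZMod 2) := fun q => dec3 ([1,2,0,4,5,6,7,3].getD (enc3 q) 0)
def F3i : (Fin 3 → ZMod 2) → (Fin 3 → ZMod 2) := fun q => dec3 ([2,0,1,7,3,4,5,6].getD (enc3 q) 0)
def G3 : (Fin 3 → ZMod 2) → (Fin 3 → ZMod 2) := fun q => dec3 ([4,5,7,3,2,6,1,0].getD (enc3 q) 0)
def G3i : (Fin 3 → ZMod 2) → (Fin 3 → ZMod 2) := fun q => dec3 ([7,6,4,3,0,1,5,2].getD (enc3 q) 0)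

lemma h31 : ∀ q, F3i (F3 q) = q := by decide
lemma h32 : ∀ q, F3 (F3i q) = q := by decide
lemma h33 : ∀ q, G3i (G3 q) = q := by decide
lemma h34 : ∀ q, G3 (G3i q) = q := by decide
lemma h3sum : ∀ q, F3 q + F3i q + G3 q + G3i q = q := by decide
lemma h3all : (∑ q : Fin 3 → ZMod 2, q) = 0 := by decide



def mask5 : List ℕ := [1074798704, 2147567880, 50332976, 137889794, 795653, 813826053, 1377829121, 50676736, 2164261958, 239081472, 1610613140, 537006602, 319293952, 1075380241, 2148925570, 1228406784, 1082400898, 608192544, 69288080, 67153944, 134275081, 75792456, 226624000, 811663392, 4231556, 2147488452, 7209472, 273711624, 2290094176, 2156006432, 107585, 838877442]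

def enc5 : (Fin 5 → ZMod 2) → ℕ :=
  fun q => (q 0).val + 2*(q 1).val + 4*(q 2).val + 8*(q 3).val + 16*(q 4).val

def bad5 (u v : Fin 5 → ZMod 2) : Bool := Nat.testBit (mask5.getD (enc5 v) 0) (enc5 u)

def Nbad5 : (Fin 5 → ZMod 2) → Finset (Fin 5 → ZMod 2) :=
  fun v => Finset.univ.filter (fun u => bad5 u v)

lemma h5card : ∀ v, (Nbad5 v).card = 6 := by decide
lemma h5sym : ∀ u v, u ∈ Nbad5 v ↔ v ∈ Nbad5 u := by decide
lemma h5irr : ∀ v, v ∉ Nbad5 v := by decide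
lemma h5sum : ∀ v, (∑ u ∈ Nbad5 v, u) = v := by decide
lemma h5all : (∑ q : Fin 5 → ZMod 2, q) = 0 := by decide


-- product designated block for odd n ≥ 7
def fA' : ((Fin 4 → ZMod 2) × (Fin 3 → ZMod 2)) → ((Fin 4 → ZMod 2) × (Fin 3 → ZMod 2)) :=
  fun x => (fA x.1, F3 x.2)
def fAi' : ((Fin 4 → ZMod 2) × (Fin 3 → ZMod 2)) → ((Fin 4 → ZMod 2) × (Fin 3 → ZMod 2)) :=
  fun x => (fAi x.1, F3i x.2)
def gB' : ((Fin 4 → ZMod 2) × (Fin 3 → ZMod 2)) → ((Fin 4 → ZMod 2) × (Fin 3 → ZMod 2)) :=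
  fun x => (gB x.1, G3 x.2)
def gBi' : ((Fin 4 → ZMod 2) × (Fin 3 → ZMod 2)) → ((Fin 4 → ZMod 2) × (Fin 3 → ZMod 2)) :=
  fun x => (gBi x.1, G3i x.2)

lemma hc16 : Fintype.card (Fin 4 → ZMod 2) = 16 := by
  simp [Fintype.card_fun]
lemma hc8 : Fintype.card (Fin 3 → ZMod 2) = 8 := by
  simp [Fintype.card_fun]

theorem main (n : ℕ) (hn : 3 < n) :
    ∃ (k : ℕ) (G : SimpleGraph (Fin (2 ^ n))),
      Odd k ∧ 0 < k ∧
      (∀ v, (G.neighborSet v).ncard = k) ∧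
      G.Connected ∧
      ∃ ℓ : Fin (2 ^ n) ≃ (Fin n → ZMod 2),
        ∀ v, ∑ᶠ u ∈ G.neighborSet v, ℓ u = 0 := by
  have hfr4 : Module.finrank (ZMod 2) (Fin 4 → ZMod 2) = 4 := by
    simp [Module.finrank_fintype_fun_eq_card]
  have hEven16 : Even (Fintype.card (Fin 4 → ZMod 2)) := by
    rw [hc16]; exact ⟨8, rfl⟩
  have hsmn : 2 * 4 + 2 < 2 ^ n := by
    calc 2 * 4 + 2 < 2 ^ 4 := by norm_num
    _ ≤ 2 ^ n := Nat.pow_le_pow_right (by norm_num) (by omega)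
  rcases Nat.even_or_odd n with he | ho
  · obtain ⟨m, hm⟩ : ∃ m, 4 + 2 * m = n := by
      obtain ⟨t, ht⟩ := he
      exact ⟨t - 2, by omega⟩
    exact xmagic_block fA fAi gB gBi hA1 hA2 hB1 hB2 hsumP hdist hallP hEven16
      m n (by rw [hfr4]; exact hm) hsmn
  · by_cases h5 : n = 5
    · subst h5
      exact xmagic 5 6 ⟨3, rfl⟩ (by norm_num)
        (AddEquiv.refl _) h5all Nbad5 h5card h5sym h5irr h5sum
    · obtain ⟨m, hm⟩ : ∃ m, 7 + 2 * m = n := by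
        obtain ⟨t, ht⟩ := ho
        exact ⟨t - 3, by omega⟩
      have hA1' : ∀ x, fAi' (fA' x) = x := fun x => Prod.ext (hA1 x.1) (h31 x.2)
      have hA2' : ∀ x, fA' (fAi' x) = x := fun x => Prod.ext (hA2 x.1) (h32 x.2)
      have hB1' : ∀ x, gBi' (gB' x) = x := fun x => Prod.ext (hB1 x.1) (h33 x.2)
      have hB2' : ∀ x, gB' (gBi' x) = x := fun x => Prod.ext (hB2 x.1) (h34 x.2)
      have hsumP' : ∀ x, fA' x + fAi' x + gB' x + gBi' x = x := by
        intro x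
        refine Prod.ext ?_ ?_
        · simpa [fA', fAi', gB', gBi'] using hsumP x.1
        · simpa [fA', fAi', gB', gBi'] using h3sum x.2
      have hdist' : ∀ x : (Fin 4 → ZMod 2) × (Fin 3 → ZMod 2),
          x ≠ fA' x ∧ x ≠ fAi' x ∧ x ≠ gB' x ∧ x ≠ gBi' x ∧
          fA' x ≠ fAi' x ∧ fA' x ≠ gB' x ∧ fA' x ≠ gBi' x ∧ fAi' x ≠ gB' x ∧
          fAi' x ≠ gBi' x ∧ gB' x ≠ gBi' x := by
        intro x
        obtain ⟨d1,d2,d3,d4,d5,d6,d7,d8,d9,d10⟩ := hdist x.1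
        exact ⟨fun h => d1 (congrArg Prod.fst h), fun h => d2 (congrArg Prod.fst h),
          fun h => d3 (congrArg Prod.fst h), fun h => d4 (congrArg Prod.fst h),
          fun h => d5 (congrArg Prod.fst h), fun h => d6 (congrArg Prod.fst h),
          fun h => d7 (congrArg Prod.fst h), fun h => d8 (congrArg Prod.fst h),
          fun h => d9 (congrArg Prod.fst h), fun h => d10 (congrArg Prod.fst h)⟩
      have hallP' : (∑ x : (Fin 4 → ZMod 2) × (Fin 3 → ZMod 2), x) = 0 :=
        sum_prod_zero hallP hEven16
      have hEven' : Even (Fintype.card ((Fin 4 → ZMod 2) × (Fin 3 → ZMod 2))) := by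
        rw [Fintype.card_prod, hc16, hc8]
        exact ⟨64, rfl⟩
      have hfr' : Module.finrank (ZMod 2) ((Fin 4 → ZMod 2) × (Fin 3 → ZMod 2)) = 7 := by
        rw [Module.finrank_prod, hfr4]
        simp [Module.finrank_fintype_fun_eq_card]
      exact xmagic_block fA' fAi' gB' gBi' hA1' hA2' hB1' hB2' hsumP' hdist' hallP' hEven'
        m n (by rw [hfr']; exact hm) hsmn

end XorMagic

theorem stmt_0 (n : ℕ) (hn : 3 < n) :
    ∃ (k : ℕ) (G : SimpleGraph (Fin (2 ^ n))),
      Odd k ∧ 0 < k ∧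
      (∀ v, (G.neighborSet v).ncard = k) ∧
      G.Connected ∧
      ∃ ℓ : Fin (2 ^ n) ≃ (Fin n → ZMod 2),
        ∀ v, ∑ᶠ u ∈ G.neighborSet v, ℓ u = 0 :=
  XorMagic.main n hn
end

section
/- Let G be a finite simple graph that admits an open XOR-magic labeling, i.e., for some n ∈ ℕ there is a bijection ℓ from V(G) to (Z_2)^n such that for every vertex v the sum in (Z_2)^n of ℓ(u) over all neighbors u of v is the zero vector. Then the determinant of the adjacency matrix of G (with integer entries) is even, i.e., det(A(G)) ≡ 0 (mod 2). -/
theorem stmt_2 {V : Type*} [Fintype V] [DecidableEq V] (G : SimpleGraph V)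
    [DecidableRel G.Adj] (n : ℕ) (ℓ : V ≃ (Fin n → ZMod 2))
    (h : ∀ v, ∑ᶠ u ∈ G.neighborSet v, ℓ u = 0) :
    (G.adjMatrix ℤ).det % 2 = 0 := by
  have key : (G.adjMatrix (ZMod 2)).det = 0 := by
    rcases Nat.eq_zero_or_pos n with hn | hn
    · subst hn
      haveI : Unique V := Equiv.unique ℓ
      rw [Matrix.det_unique]
      simp
    · rw [← Matrix.exists_mulVec_eq_zero_iff]
      refine ⟨fun v => ℓ v ⟨0, hn⟩, ?_, ?_⟩
      · intro hw
        have h1 : ℓ (ℓ.symm (fun _ => 1)) ⟨0, hn⟩ = 0 := congrFun hw (ℓ.symm (fun _ => 1))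
        simp at h1
      · funext v
        have := h v
        rw [show G.neighborSet v = ↑(G.neighborFinset v) by simp [SimpleGraph.neighborFinset_def], finsum_mem_coe_finset] at this
        · have h2 : ∑ u ∈ G.neighborFinset v, ℓ u ⟨0, hn⟩ = 0 := by
            rw [← Finset.sum_apply]
            · exact congrFun this ⟨0, hn⟩
          simp only [SimpleGraph.adjMatrix_mulVec_apply, Pi.zero_apply]
          exact h2
  have hdvd : (2 : ℤ) ∣ (G.adjMatrix ℤ).det := by
    have : (((G.adjMatrix ℤ).det : ℤ) : ZMod 2) = 0 := by
      have hmap : (G.adjMatrix ℤ).map (Int.cast : ℤ → ZMod 2) = G.adjMatrix (ZMod 2) := by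
        ext u v
        simp [SimpleGraph.adjMatrix, Matrix.of_apply, apply_ite]
      have := RingHom.map_det (Int.castRingHom (ZMod 2)) (G.adjMatrix ℤ)
      rw [show ((Int.castRingHom (ZMod 2)) (G.adjMatrix ℤ).det) = (((G.adjMatrix ℤ).det : ℤ) : ZMod 2) from rfl] at this
      rw [this, show ((Int.castRingHom (ZMod 2)).mapMatrix (G.adjMatrix ℤ)) = (G.adjMatrix ℤ).map (Int.cast : ℤ → ZMod 2) from rfl, hmap, key]
    exact (ZMod.intCast_zmod_eq_zero_iff_dvd _ 2).mp this
  exact Int.emod_eq_zero_of_dvd hdvd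
end

section
/- Let m = 2^n with n > 1, let s_1, …, s_k ∈ {1, …, m/2 − 1} and set S = {s_1, …, s_k, m/2} and S' = {m/2 − s_1, …, m/2 − s_k}. Then the circulant graph G_1 = C_m(S) is an open XOR-magic graph (connected and admitting a bijective labeling of its vertices by (Z_2)^n with all open-neighborhood sums zero) if and only if the circulant graph G_2 = C_m(S') is a closed XOR-magic graph (connected and admitting a bijective labeling by (Z_2)^n with all closed-neighborhood sums zero). -/
/-- The circulant graph `C_m(S)` on vertex set `ZMod m`: distinct vertices `i` and `j`
are adjacent iff `i - j ≡ ±s (mod m)` for some `s ∈ S`. -/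
def circulant (m : ℕ) (S : Set ℕ) : SimpleGraph (ZMod m) :=
  SimpleGraph.fromRel (fun i j => ∃ s ∈ S, i - j = (s : ZMod m))

lemma circulant_adj {m : ℕ} {S : Set ℕ} {i j : ZMod m} :
    (circulant m S).Adj i j ↔ i ≠ j ∧ ∃ s ∈ S, (i - j = (s : ZMod m) ∨ j - i = (s : ZMod m)) := by
  simp only [circulant, SimpleGraph.fromRel_adj]
  constructor
  · rintro ⟨h, ⟨t, ht, he⟩ | ⟨t, ht, he⟩⟩
    exacts [⟨h, t, ht, Or.inl he⟩, ⟨h, t, ht, Or.inr he⟩]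
  · rintro ⟨h, t, ht, he | he⟩
    exacts [⟨h, Or.inl ⟨t, ht, he⟩⟩, ⟨h, Or.inr ⟨t, ht, he⟩⟩]

/-- translation as a graph hom -/
def transHom (m : ℕ) (S : Set ℕ) (a : ZMod m) : circulant m S →g circulant m S where
  toFun := fun x => x + a
  map_rel' := by
    intro x y h
    rw [circulant_adj] at h ⊢
    obtain ⟨hne, t, ht, he⟩ := h
    refine ⟨by simpa using hne, t, ht, by simpa using he⟩

@[simp] lemma transHom_apply (m : ℕ) (S : Set ℕ) (a x : ZMod m) :
    transHom m S a x = x + a := rfl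

lemma reach_add {m : ℕ} {S : Set ℕ} {x y : ZMod m}
    (hx : (circulant m S).Reachable 0 x) (hy : (circulant m S).Reachable 0 y) :
    (circulant m S).Reachable 0 (x + y) := by
  have h2 := hy.map (transHom m S x)
  rw [transHom_apply, transHom_apply, zero_add, add_comm] at h2
  exact hx.trans h2

lemma reach_neg {m : ℕ} {S : Set ℕ} {x : ZMod m}
    (hx : (circulant m S).Reachable 0 x) : (circulant m S).Reachable 0 (-x) := by
  have h2 := hx.map (transHom m S (-x))
  rw [transHom_apply, transHom_apply, zero_add, add_neg_cancel] at h2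
  exact h2.symm

lemma reachable_iff_mem_closure {m : ℕ} {S : Set ℕ} {x : ZMod m} :
    (circulant m S).Reachable 0 x ↔ x ∈ AddSubgroup.closure ((fun t : ℕ => (t : ZMod m)) '' S) := by
  constructor
  · intro h
    have key : ∀ (a b : ZMod m), (circulant m S).Walk a b →
        b - a ∈ AddSubgroup.closure ((fun t : ℕ => (t : ZMod m)) '' S) := by
      intro a b w
      induction w with
      | nil => simpa using AddSubgroup.zero_mem _
      | @cons a u b hadj p ih =>
        rw [circulant_adj] at hadj
        obtain ⟨hne, t, ht, he | he⟩ := hadj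
        · have h1 : a - u ∈ AddSubgroup.closure ((fun t : ℕ => (t : ZMod m)) '' S) :=
            he ▸ AddSubgroup.subset_closure ⟨t, ht, rfl⟩
          have := AddSubgroup.sub_mem _ ih h1
          simpa [sub_sub_sub_cancel_right] using this
        · have h1 : u - a ∈ AddSubgroup.closure ((fun t : ℕ => (t : ZMod m)) '' S) :=
            he ▸ AddSubgroup.subset_closure ⟨t, ht, rfl⟩
          have := AddSubgroup.add_mem _ ih h1
          simpa [sub_add_sub_cancel] using this
    obtain ⟨w⟩ := h
    simpa using key 0 x w
  · intro h
    induction h using AddSubgroup.closure_induction with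
    | mem y hy =>
      obtain ⟨t, ht, rfl⟩ := hy
      show (circulant m S).Reachable 0 (t : ZMod m)
      by_cases h0 : (t : ZMod m) = 0
      · rw [h0]
      · refine SimpleGraph.Adj.reachable ?_
        rw [circulant_adj]
        exact ⟨fun h => h0 h.symm, t, ht, Or.inr (by simp)⟩
    | zero => rfl
    | add x y hx hy ihx ihy => exact reach_add ihx ihy
    | neg x hx ihx => exact reach_neg ihx

lemma connected_iff_closure_top {m : ℕ} [NeZero m] {S : Set ℕ} :
    (circulant m S).Connected ↔
      AddSubgroup.closure ((fun t : ℕ => (t : ZMod m)) '' S) = ⊤ := by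
  rw [SimpleGraph.connected_iff_exists_forall_reachable]
  constructor
  · rintro ⟨v, hv⟩
    rw [AddSubgroup.eq_top_iff']
    intro x
    rw [← reachable_iff_mem_closure]
    exact ((hv 0).symm).trans (hv x)
  · intro h
    exact ⟨0, fun w => reachable_iff_mem_closure.2 (h ▸ AddSubgroup.mem_top w)⟩
lemma eq_top_of_unit_mem {m : ℕ} [NeZero m] (H : AddSubgroup (ZMod m)) (x : ZMod m)
    (hx : x ∈ H) (hu : IsUnit x) : H = ⊤ := by
  have mul_mem : ∀ (c y : ZMod m), y ∈ H → c * y ∈ H := by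
    intro c y hy
    have : c * y = (c.val : ℕ) • y := by
      rw [nsmul_eq_mul, ZMod.natCast_rightInverse c]
    rw [this]
    exact AddSubgroup.nsmul_mem H hy _
  obtain ⟨u, rfl⟩ := hu
  have h1 : (1 : ZMod m) ∈ H := by
    have := mul_mem (↑u⁻¹) _ hx
    rwa [Units.inv_mul] at this
  rw [AddSubgroup.eq_top_iff']
  intro z
  simpa using mul_mem z 1 h1

lemma closure_natCast_top_iff {n : ℕ} (hn : 0 < n) (T : Set ℕ) :
    AddSubgroup.closure ((fun t : ℕ => (t : ZMod (2 ^ n))) '' T) = ⊤ ↔ ∃ t ∈ T, ¬ 2 ∣ t := by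
  have h2 : (2 : ℕ) ∣ 2 ^ n := dvd_pow_self 2 hn.ne'
  haveI : NeZero (2 ^ n) := ⟨by positivity⟩
  constructor
  · intro htop
    by_contra hall
    push_neg at hall
    let f : ZMod (2 ^ n) →+ ZMod 2 := (ZMod.castHom h2 (ZMod 2)).toAddMonoidHom
    have hle : AddSubgroup.closure ((fun t : ℕ => (t : ZMod (2 ^ n))) '' T) ≤ f.ker := by
      rw [AddSubgroup.closure_le]
      rintro x ⟨t, ht, rfl⟩
      have : f (t : ZMod (2 ^ n)) = (t : ZMod 2) := by
        simp [f, ZMod.castHom_apply]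
      show (t : ZMod (2 ^ n)) ∈ f.ker
      rw [AddMonoidHom.mem_ker, this, ZMod.natCast_eq_zero_iff]
      exact hall t ht
    rw [htop] at hle
    have h1 : (ZMod.castHom h2 (ZMod 2)) (1 : ZMod (2 ^ n)) = 0 := hle (AddSubgroup.mem_top 1)
    rw [map_one] at h1
    exact one_ne_zero h1
  · rintro ⟨t, ht, hodd⟩
    refine eq_top_of_unit_mem _ (t : ZMod (2 ^ n))
      (AddSubgroup.subset_closure ⟨t, ht, rfl⟩) ?_
    rw [ZMod.isUnit_iff_coprime]
    exact Nat.Coprime.pow_right n (Nat.coprime_two_right.2 (Nat.odd_iff.2 (Nat.two_dvd_ne_zero.1 hodd)))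

lemma key_adj {k : ℕ} (m h : ℕ) (hm : m = 2 * h) (hpos : 0 < h) (s : Fin k → ℕ)
    (hs : ∀ i, 1 ≤ s i ∧ s i < h) (v u : ZMod m) :
    (u = v ∨ (circulant m ((fun x => h - x) '' Set.range s)).Adj v u) ↔
      (circulant m (Set.range s ∪ {h})).Adj (v + (h : ZMod m)) u := by
  haveI : NeZero m := ⟨by omega⟩
  have HH : (h : ZMod m) + (h : ZMod m) = 0 := by
    rw [← Nat.cast_add, show h + h = m by omega, ZMod.natCast_self]
  have Hne : (h : ZMod m) ≠ 0 := by
    rw [Ne, ZMod.natCast_eq_zero_iff]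
    intro hd
    have := Nat.le_of_dvd hpos hd
    omega
  have scast : ∀ i : Fin k, ((h - s i : ℕ) : ZMod m) = (h : ZMod m) - ((s i : ℕ) : ZMod m) := by
    intro i
    exact Nat.cast_sub (hs i).2.le
  have sne : ∀ i : Fin k, ((s i : ℕ) : ZMod m) ≠ 0 := by
    intro i
    rw [Ne, ZMod.natCast_eq_zero_iff]
    intro hd
    have := Nat.le_of_dvd (by have := (hs i).1; omega) hd
    have := (hs i).2
    omega
  have sneH : ∀ i : Fin k, ((s i : ℕ) : ZMod m) ≠ (h : ZMod m) := by
    intro i hEq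
    have h1 : ((s i : ℕ) : ZMod m).val = s i := ZMod.val_cast_of_lt (by have := (hs i).2; omega)
    have h2 : ((h : ℕ) : ZMod m).val = h := ZMod.val_cast_of_lt (by omega)
    rw [hEq, h2] at h1
    have := (hs i).2
    omega
  rw [circulant_adj, circulant_adj]
  constructor
  · rintro (rfl | ⟨hne, t, ⟨x, ⟨i, rfl⟩, rfl⟩, he⟩)
    · exact ⟨fun hc => Hne (by linear_combination hc), h, Or.inr rfl, Or.inl (by ring)⟩
    · rw [scast i] at he
      rcases he with he | he
      · exact ⟨fun hc => sne i (by linear_combination he - hc + HH), s i, Or.inl ⟨i, rfl⟩,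
          Or.inr (by linear_combination -he - HH)⟩
      · exact ⟨fun hc => sne i (by linear_combination hc + he), s i, Or.inl ⟨i, rfl⟩,
          Or.inl (by linear_combination -he)⟩
  · rintro ⟨hne, t, (⟨i, rfl⟩ | rfl), he⟩
    · rcases he with he | he
      · exact Or.inr ⟨fun hc => sneH i (by linear_combination hc - he), (h - s i : ℕ),
          ⟨s i, ⟨i, rfl⟩, rfl⟩, by rw [scast i]; exact Or.inr (by linear_combination -he)⟩
      · exact Or.inr ⟨fun hc => sneH i (by linear_combination -he - hc - HH), (h - s i : ℕ),
          ⟨s i, ⟨i, rfl⟩, rfl⟩, by rw [scast i]; exact Or.inl (by linear_combination -he - HH)⟩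
    · rcases he with he | he
      · exact Or.inl (by linear_combination -he)
      · exact Or.inl (by linear_combination he + HH)

theorem stmt_3 (n k : ℕ) (hn : 1 < n) (s : Fin k → ℕ)
    (hs : ∀ i, s i ∈ Set.Icc 1 (2 ^ (n - 1) - 1)) :
    ((circulant (2 ^ n) (Set.range s ∪ {2 ^ (n - 1)})).Connected ∧
      ∃ ℓ : ZMod (2 ^ n) ≃ (Fin n → ZMod 2),
        ∀ v, ∑ᶠ u ∈ (circulant (2 ^ n) (Set.range s ∪ {2 ^ (n - 1)})).neighborSet v,
          ℓ u = 0)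
    ↔
    ((circulant (2 ^ n) ((fun x => 2 ^ (n - 1) - x) '' Set.range s)).Connected ∧
      ∃ ℓ : ZMod (2 ^ n) ≃ (Fin n → ZMod 2),
        ∀ v, ∑ᶠ u ∈ insert v
            ((circulant (2 ^ n) ((fun x => 2 ^ (n - 1) - x) '' Set.range s)).neighborSet v),
          ℓ u = 0) := by
  haveI : NeZero (2 ^ n) := ⟨by positivity⟩
  have hp1 : (1 : ℕ) ≤ 2 ^ (n - 1) := Nat.one_le_two_pow
  have hm : 2 ^ n = 2 * 2 ^ (n - 1) := by
    have hn1 : n - 1 + 1 = n := by omega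
    calc 2 ^ n = 2 ^ (n - 1 + 1) := by rw [hn1]
    _ = 2 * 2 ^ (n - 1) := pow_succ' 2 (n - 1)
  have hs' : ∀ i, 1 ≤ s i ∧ s i < 2 ^ (n - 1) := by
    intro i
    have := hs i
    simp only [Set.mem_Icc] at this
    omega
  have h2h : (2 : ℕ) ∣ 2 ^ (n - 1) := dvd_pow_self 2 (by omega)
  have HH : ((2 ^ (n - 1) : ℕ) : ZMod (2 ^ n)) + ((2 ^ (n - 1) : ℕ) : ZMod (2 ^ n)) = 0 := by
    rw [← Nat.cast_add, show 2 ^ (n - 1) + 2 ^ (n - 1) = 2 ^ n by omega, ZMod.natCast_self]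
  -- the neighborhood correspondence
  have hset : ∀ v : ZMod (2 ^ n),
      insert v ((circulant (2 ^ n) ((fun x => 2 ^ (n - 1) - x) '' Set.range s)).neighborSet v)
        = (circulant (2 ^ n) (Set.range s ∪ {2 ^ (n - 1)})).neighborSet
            (v + ((2 ^ (n - 1) : ℕ) : ZMod (2 ^ n))) := by
    intro v
    ext u
    simp only [Set.mem_insert_iff, SimpleGraph.mem_neighborSet]
    exact key_adj (2 ^ n) (2 ^ (n - 1)) hm (by omega) s hs' v u
  -- connectivity equivalence
  have hodd1 : (∃ t ∈ Set.range s ∪ ({2 ^ (n - 1)} : Set ℕ), ¬ 2 ∣ t) ↔ ∃ i, ¬ 2 ∣ s i := by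
    constructor
    · rintro ⟨t, (⟨i, rfl⟩ | rfl), hodd⟩
      exacts [⟨i, hodd⟩, absurd h2h hodd]
    · rintro ⟨i, hodd⟩
      exact ⟨s i, Or.inl ⟨i, rfl⟩, hodd⟩
  have hodd2 : (∃ t ∈ (fun x => 2 ^ (n - 1) - x) '' Set.range s, ¬ 2 ∣ t) ↔ ∃ i, ¬ 2 ∣ s i := by
    constructor
    · rintro ⟨t, ⟨x, ⟨i, rfl⟩, rfl⟩, hodd⟩
      refine ⟨i, ?_⟩
      have hodd' : ¬ 2 ∣ 2 ^ (n - 1) - s i := hodd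
      have := hs' i
      omega
    · rintro ⟨i, hodd⟩
      refine ⟨2 ^ (n - 1) - s i, ⟨s i, ⟨i, rfl⟩, rfl⟩, ?_⟩
      have := hs' i
      omega
  have hc1 := (connected_iff_closure_top (m := 2 ^ n)
      (S := Set.range s ∪ {2 ^ (n - 1)})).trans
    ((closure_natCast_top_iff (by omega) _).trans hodd1)
  have hc2 := (connected_iff_closure_top (m := 2 ^ n)
      (S := (fun x => 2 ^ (n - 1) - x) '' Set.range s)).trans
    ((closure_natCast_top_iff (by omega) _).trans hodd2)
  have hconn := hc1.trans hc2.symm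
  -- sum equivalence
  have hsum : ∀ ℓ : ZMod (2 ^ n) ≃ (Fin n → ZMod 2),
      ((∀ v, ∑ᶠ u ∈ (circulant (2 ^ n) (Set.range s ∪ {2 ^ (n - 1)})).neighborSet v, ℓ u = 0) ↔
        (∀ v, ∑ᶠ u ∈ insert v
          ((circulant (2 ^ n) ((fun x => 2 ^ (n - 1) - x) '' Set.range s)).neighborSet v),
            ℓ u = 0)) := by
    intro ℓ
    constructor
    · intro hL v
      rw [hset v]
      exact hL _
    · intro hL v
      have h1 := hL (v + ((2 ^ (n - 1) : ℕ) : ZMod (2 ^ n)))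
      rw [hset, add_assoc, HH, add_zero] at h1
      exact h1
  constructor
  · rintro ⟨hcon, ℓ, hℓ⟩
    exact ⟨hconn.1 hcon, ℓ, (hsum ℓ).1 hℓ⟩
  · rintro ⟨hcon, ℓ, hℓ⟩
    exact ⟨hconn.2 hcon, ℓ, (hsum ℓ).2 hℓ⟩
end

section
/- Let m = 2^n with n > 2, let r ∈ {1, …, m/2 − 1}, and let S = {m/2 − r, m/2 − r + 1, …, m/2 − 1, m/2}. Then the determinant of the integer adjacency matrix of the circulant graph G = C_m(S) satisfies |det(A(G))| = 2r + 1. -/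
open scoped Classical

noncomputable section CircAux

variable (N : ℕ) [NeZero N]

/-- The standard additive character `x ↦ exp(2πi x/N)` on `ZMod N`. -/
def eN : ZMod N → ℂ := fun x => Complex.exp (2 * Real.pi * Complex.I / N) ^ x.val

lemma eN_prim : IsPrimitiveRoot (Complex.exp (2 * Real.pi * Complex.I / N)) N :=
  Complex.isPrimitiveRoot_exp N (NeZero.ne N)

set_option linter.unusedSectionVars false in
lemma eN_zero : eN N 0 = 1 := by simp [eN]

lemma eN_add (x y : ZMod N) : eN N (x + y) = eN N x * eN N y := by
  unfold eN
  rw [← pow_add, ZMod.val_add]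
  have h := (eN_prim N).pow_eq_one
  have := Nat.mod_add_div (x.val + y.val) N
  conv_rhs => rw [← this]
  rw [pow_add, pow_mul, h, one_pow, mul_one]

lemma eN_nsmul (k : ℕ) (x : ZMod N) : eN N ((k : ZMod N) * x) = eN N x ^ k := by
  induction k with
  | zero => simp [eN_zero]
  | succ k ih =>
    push_cast
    rw [add_mul, one_mul, eN_add, ih, pow_succ]

lemma eN_ne_one {j : ZMod N} (hj : j ≠ 0) : eN N j ≠ 1 := by
  intro h
  have hdvd := (eN_prim N).dvd_of_pow_eq_one _ h
  have hlt := ZMod.val_lt j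
  have h0 : j.val = 0 := Nat.eq_zero_of_dvd_of_lt hdvd hlt
  exact hj ((ZMod.val_eq_zero j).mp h0)

lemma eN_inj : Function.Injective (eN N) := by
  intro a b hab
  have := (eN_prim N).pow_inj (ZMod.val_lt a) (ZMod.val_lt b) hab
  exact ZMod.val_injective N this

end CircAux

section Det

variable (N : ℕ) [NeZero N]

/-- The Fin N ≃ ZMod N equivalence. -/
def finZMod : Fin N ≃ ZMod N where
  toFun i := (i : ℕ)
  invFun x := ⟨x.val, x.val_lt⟩
  left_inv i := by
    ext
    exact ZMod.val_cast_of_lt i.isLt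
  right_inv x := ZMod.natCast_rightInverse x

lemma det_circulant_eq (v : ZMod N → ℂ) :
    (Matrix.circulant v).det = ∏ j : ZMod N, ∑ t : ZMod N, v t * eN N (t * j) := by
  set V : Matrix (ZMod N) (ZMod N) ℂ := Matrix.of fun i j => eN N (i * j) with hV
  have key : Matrix.circulant v * V
      = V * Matrix.diagonal (fun j => ∑ t : ZMod N, v t * eN N (-(t * j))) := by
    ext i j
    rw [Matrix.mul_diagonal, Matrix.mul_apply]
    simp only [Matrix.circulant_apply, hV, Matrix.of_apply]
    rw [Finset.mul_sum]
    refine Fintype.sum_equiv (Equiv.subLeft i) _ _ fun k => ?_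
    simp only [Equiv.subLeft_apply]
    have h2 : i * j + -((i - k) * j) = k * j := by ring
    rw [← h2, eN_add N]
    ring
  have hdetV : V.det ≠ 0 := by
    have hsub : V.submatrix (finZMod N) (finZMod N)
        = (Matrix.vandermonde (fun j : Fin N => eN N (finZMod N j))).transpose := by
      ext i j
      simp only [Matrix.submatrix_apply, Matrix.transpose_apply, Matrix.vandermonde_apply,
        hV, Matrix.of_apply]
      rw [show ((finZMod N i) * (finZMod N j) : ZMod N)
          = ((i : ℕ) : ZMod N) * (finZMod N j) from rfl, eN_nsmul]
    have : V.det = (Matrix.vandermonde (fun j : Fin N => eN N (finZMod N j))).det := by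
      rw [← Matrix.det_submatrix_equiv_self (finZMod N) V, hsub, Matrix.det_transpose]
    rw [this, Matrix.det_vandermonde_ne_zero_iff]
    exact (eN_inj N).comp (finZMod N).injective
  have hdet := congrArg Matrix.det key
  rw [Matrix.det_mul, Matrix.det_mul, Matrix.det_diagonal, mul_comm V.det] at hdet
  have h3 := mul_right_cancel₀ hdetV hdet
  rw [h3]
  refine Fintype.prod_equiv (Equiv.neg (ZMod N)) _ _ fun j => ?_
  refine Finset.sum_congr rfl fun t _ => ?_
  rw [Equiv.neg_apply, mul_neg]

end Det

section Band

variable (N : ℕ) [NeZero N]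

lemma fourier_band (c d : ℕ) (j : ZMod N) :
    (∑ t : ZMod N, (∑ k ∈ Finset.Ico c (c + d), if (k : ZMod N) = t then (1 : ℂ) else 0)
        * eN N (t * j))
      = ∑ k ∈ Finset.Ico c (c + d), eN N j ^ k := by
  simp only [Finset.sum_mul, ite_mul, one_mul, zero_mul]
  rw [Finset.sum_comm]
  refine Finset.sum_congr rfl fun k _ => ?_
  rw [Finset.sum_ite_eq (Finset.univ : Finset (ZMod N)) ((k : ZMod N)) (fun t => eN N (t * j))]
  simp [eN_nsmul]

lemma prod_band (c d : ℕ) (hd : Nat.Coprime d N) :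
    ∃ ε : ℂ, (ε = 1 ∨ ε = -1) ∧
      (∏ j : ZMod N, ∑ k ∈ Finset.Ico c (c + d), eN N j ^ k) = (d : ℂ) * ε := by
  classical
  set s : Finset (ZMod N) := Finset.univ.erase 0 with hs
  set F : ZMod N → ℂ := fun j => ∑ k ∈ Finset.Ico c (c + d), eN N j ^ k with hF
  have hsplit : (∏ j : ZMod N, F j) = F 0 * ∏ j ∈ s, F j :=
    (Finset.mul_prod_erase Finset.univ F (Finset.mem_univ 0)).symm
  have hF0 : F 0 = (d : ℂ) := by
    simp [hF, eN_zero, Nat.card_Ico]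
  -- the nonzero factor product
  set E : ℂ := ∏ j ∈ s, eN N j ^ c with hE
  have hEE : E * E = 1 := by
    have hneg : (∏ j ∈ s, eN N j ^ c) = ∏ j ∈ s, eN N (-j) ^ c := by
      refine Finset.prod_nbij' (fun j => -j) (fun j => -j) ?_ ?_ ?_ ?_ ?_
      · intro a ha
        simp only [hs, Finset.mem_erase, Finset.mem_univ, and_true] at ha ⊢
        exact fun h => ha (neg_eq_zero.mp h)
      · intro a ha
        simp only [hs, Finset.mem_erase, Finset.mem_univ, and_true] at ha ⊢
        exact fun h => ha (neg_eq_zero.mp h)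
      · intro a _; simp
      · intro a _; simp
      · intro a _; simp
    calc E * E = (∏ j ∈ s, eN N j ^ c) * ∏ j ∈ s, eN N (-j) ^ c := by
          rw [← hneg, ← hE]
      _ = ∏ j ∈ s, eN N j ^ c * eN N (-j) ^ c := Finset.prod_mul_distrib.symm
      _ = ∏ j ∈ s, 1 := by
          refine Finset.prod_congr rfl fun a _ => ?_
          rw [← mul_pow, ← eN_add, add_neg_cancel, eN_zero, one_pow]
      _ = 1 := Finset.prod_const_one
  have hEpm : E = 1 ∨ E = -1 := mul_self_eq_one_iff.mp hEE
  have hne1 : ∀ j ∈ s, eN N j ≠ 1 := by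
    intro j hj
    exact eN_ne_one N (Finset.ne_of_mem_erase hj)
  have hD0 : (∏ j ∈ s, (eN N j - 1)) ≠ 0 := by
    refine Finset.prod_ne_zero_iff.mpr fun j hj => ?_
    exact sub_ne_zero.mpr (hne1 j hj)
  -- geometric sum identity
  have hgeom : ∀ j ∈ s, F j * (eN N j - 1) = eN N j ^ c * (eN N j ^ d - 1) := by
    intro j hj
    have : F j = eN N j ^ c * ∑ i ∈ Finset.range d, eN N j ^ i := by
      show (∑ k ∈ Finset.Ico c (c + d), eN N j ^ k) = _
      rw [Finset.sum_Ico_eq_sum_range]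
      simp only [Nat.add_sub_cancel_left, pow_add]
      rw [← Finset.mul_sum]
    rw [this, mul_assoc, geom_sum_mul]
  -- the multiplicative shift by d
  set u : (ZMod N)ˣ := ZMod.unitOfCoprime d hd with hu
  have hud : (u : ZMod N) = (d : ZMod N) := ZMod.coe_unitOfCoprime d hd
  have hshift : (∏ j ∈ s, (eN N j ^ d - 1)) = ∏ j ∈ s, (eN N j - 1) := by
    have key : ∀ j : ZMod N, eN N j ^ d = eN N ((d : ZMod N) * j) :=
      fun j => (eN_nsmul N d j).symm
    calc (∏ j ∈ s, (eN N j ^ d - 1)) = ∏ j ∈ s, (eN N ((d : ZMod N) * j) - 1) := by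
          simp only [key]
      _ = ∏ j ∈ s, (eN N j - 1) := by
          refine Finset.prod_nbij' (fun j => (d : ZMod N) * j)
            (fun j => ((u⁻¹ : (ZMod N)ˣ) : ZMod N) * j) ?_ ?_ ?_ ?_ ?_
          · intro a ha
            simp only [hs, Finset.mem_erase, Finset.mem_univ, and_true] at ha ⊢
            intro h0
            apply ha
            have : ((u⁻¹ : (ZMod N)ˣ) : ZMod N) * ((d : ZMod N) * a)
                = ((u⁻¹ : (ZMod N)ˣ) : ZMod N) * 0 := by rw [h0]
            rwa [← hud, ← mul_assoc, Units.inv_mul, one_mul, mul_zero] at this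
          · intro a ha
            simp only [hs, Finset.mem_erase, Finset.mem_univ, and_true] at ha ⊢
            intro h0
            apply ha
            have : (u : ZMod N) * (((u⁻¹ : (ZMod N)ˣ) : ZMod N) * a)
                = (u : ZMod N) * 0 := by rw [h0]
            rwa [← mul_assoc, Units.mul_inv, one_mul, mul_zero] at this
          · intro a _
            show ((u⁻¹ : (ZMod N)ˣ) : ZMod N) * ((d : ZMod N) * a) = a
            rw [← hud, ← mul_assoc, Units.inv_mul, one_mul]
          · intro a _
            show (d : ZMod N) * (((u⁻¹ : (ZMod N)ˣ) : ZMod N) * a) = a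
            rw [← hud, ← mul_assoc, Units.mul_inv, one_mul]
          · intro a _
            rfl
  have hPD : (∏ j ∈ s, F j) * (∏ j ∈ s, (eN N j - 1))
      = E * ∏ j ∈ s, (eN N j - 1) := by
    rw [← Finset.prod_mul_distrib]
    calc (∏ j ∈ s, F j * (eN N j - 1))
        = ∏ j ∈ s, eN N j ^ c * (eN N j ^ d - 1) := Finset.prod_congr rfl hgeom
      _ = (∏ j ∈ s, eN N j ^ c) * ∏ j ∈ s, (eN N j ^ d - 1) := Finset.prod_mul_distrib
      _ = E * ∏ j ∈ s, (eN N j - 1) := by rw [hshift, hE]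
  have hP : (∏ j ∈ s, F j) = E := mul_right_cancel₀ hD0 hPD
  exact ⟨E, hEpm, by rw [hsplit, hF0, hP]⟩

end Band

lemma castSubEq (N k : ℕ) (hk : k ≤ N) : ((N - k : ℕ) : ZMod N) = -(k : ZMod N) := by
  have h0 : ((N : ℕ) : ZMod N) = 0 := ZMod.natCast_self N
  rw [Nat.cast_sub hk, h0, zero_sub]

theorem stmt_4 (n r : ℕ) (hn : 2 < n) (hr : 1 ≤ r) (hr' : r ≤ 2 ^ (n - 1) - 1) :
    ((circulant (2 ^ n) (Set.Icc (2 ^ (n - 1) - r) (2 ^ (n - 1)))).adjMatrix ℤ).det.natAbs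
      = 2 * r + 1 := by
  have hNpos : 0 < 2 ^ n := Nat.pow_pos (by norm_num)
  haveI : NeZero (2 ^ n) := ⟨by positivity⟩
  set H : ℕ := 2 ^ (n - 1) with hH
  set N : ℕ := 2 ^ n with hNdef
  have hH4 : 4 ≤ H := by
    calc (4 : ℕ) = 2 ^ 2 := by norm_num
    _ ≤ 2 ^ (n - 1) := Nat.pow_le_pow_right (by norm_num) (by omega)
  have hNH : N = 2 * H := by
    rw [hNdef, hH, ← pow_succ']
    congr 1
    omega
  have hrH : r ≤ H - 1 := hr'
  set c : ℕ := H - r with hc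
  set d : ℕ := 2 * r + 1 with hd
  -- Step A: identify the adjacency matrix with a circulant matrix
  have hadj : (circulant N (Set.Icc (H - r) H)).adjMatrix ℤ
      = Matrix.circulant (fun t : ZMod N =>
          ∑ k ∈ Finset.Ico c (c + d), if (k : ZMod N) = t then (1 : ℤ) else 0) := by
    ext i j
    rw [Matrix.circulant_apply, SimpleGraph.adjMatrix_apply]
    have hiff : (∃ k ∈ Finset.Ico c (c + d), (k : ZMod N) = i - j)
        ↔ (circulant N (Set.Icc (H - r) H)).Adj i j := by
      constructor
      · rintro ⟨k, hkm, hk⟩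
        rw [Finset.mem_Ico] at hkm
        have hk1 : 1 ≤ k := by omega
        have hkN : k < N := by omega
        refine (SimpleGraph.fromRel_adj _ _ _).mpr ⟨?_, ?_⟩
        · intro hij
          have hv : (k : ZMod N).val = 0 := by
            rw [hk, hij, sub_self, ZMod.val_zero]
          rw [ZMod.val_cast_of_lt hkN] at hv
          omega
        · by_cases hkh : k ≤ H
          · exact Or.inl ⟨k, Set.mem_Icc.mpr ⟨by omega, hkh⟩, hk.symm⟩
          · refine Or.inr ⟨N - k, Set.mem_Icc.mpr ⟨by omega, by omega⟩, ?_⟩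
            rw [castSubEq _ _ hkN.le, hk, neg_sub]
      · intro hAdj
        obtain ⟨hne, hrel⟩ := (SimpleGraph.fromRel_adj _ _ _).mp hAdj
        rcases hrel with ⟨s, hs, heq⟩ | ⟨s, hs, heq⟩ <;> rw [Set.mem_Icc] at hs
        · exact ⟨s, Finset.mem_Ico.mpr ⟨by omega, by omega⟩, heq.symm⟩
        · refine ⟨N - s, Finset.mem_Ico.mpr ⟨by omega, by omega⟩, ?_⟩
          rw [castSubEq _ _ (by omega), ← heq, neg_sub]
    by_cases hex : ∃ k ∈ Finset.Ico c (c + d), (k : ZMod N) = i - j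
    · obtain ⟨k₀, hk₀m, hk₀⟩ := hex
      rw [if_pos (hiff.mp ⟨k₀, hk₀m, hk₀⟩), Finset.sum_eq_single k₀]
      · rw [if_pos hk₀]
      · intro b hb hbne
        rw [if_neg]
        intro hbc
        apply hbne
        have hb' : b < N := by have := Finset.mem_Ico.mp hb; omega
        have hk' : k₀ < N := by have := Finset.mem_Ico.mp hk₀m; omega
        have hvv := congrArg ZMod.val (hbc.trans hk₀.symm)
        rwa [ZMod.val_cast_of_lt hb', ZMod.val_cast_of_lt hk'] at hvv
      · intro habs
        exact absurd hk₀m habs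
    · rw [if_neg (fun hAdj => hex (hiff.mpr hAdj))]
      exact (Finset.sum_eq_zero fun k hk => if_neg fun hcst => hex ⟨k, hk, hcst⟩).symm
  rw [hadj]
  -- Step B: compute the determinant over ℂ
  set w : ZMod N → ℤ := fun t =>
    ∑ k ∈ Finset.Ico c (c + d), if (k : ZMod N) = t then (1 : ℤ) else 0 with hw
  have hcast : (((Matrix.circulant w).det : ℤ) : ℂ)
      = (Matrix.circulant (fun t : ZMod N =>
          ∑ k ∈ Finset.Ico c (c + d), if (k : ZMod N) = t then (1 : ℂ) else 0)).det := by
    have h1 := RingHom.map_det (Int.castRingHom ℂ) (Matrix.circulant w)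
    rw [RingHom.mapMatrix_apply, Matrix.map_circulant] at h1
    simp only [Int.coe_castRingHom] at h1
    rw [h1]
    congr 1
    funext t
    push_cast [hw]
    rfl
  have hcop : Nat.Coprime d N := by
    rw [hNdef]
    exact Nat.Coprime.pow_right n (Nat.coprime_two_right.mpr ⟨r, by omega⟩)
  obtain ⟨ε, hεpm, hεeq⟩ := prod_band N c d hcop
  have hdetC : (((Matrix.circulant w).det : ℤ) : ℂ) = (d : ℂ) * ε := by
    rw [hcast, det_circulant_eq]
    rw [← hεeq]
    exact Finset.prod_congr rfl fun j _ => fourier_band N c d j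
  rcases hεpm with hε | hε
  · have : (((Matrix.circulant w).det : ℤ) : ℂ) = ((d : ℤ) : ℂ) := by
      rw [hdetC, hε, mul_one]
      push_cast
      ring
    have hdet : (Matrix.circulant w).det = (d : ℤ) := Int.cast_injective this
    rw [hdet, hd]
    push_cast
    omega
  · have : (((Matrix.circulant w).det : ℤ) : ℂ) = ((-(d : ℤ) : ℤ) : ℂ) := by
      rw [hdetC, hε]
      push_cast
      ring
    have hdet : (Matrix.circulant w).det = -(d : ℤ) := Int.cast_injective this
    rw [hdet, hd]
    push_cast
    omega
end

section
/- Let m = 2^n with n > 2, let r ∈ {1, …, m/2 − 1}, and let S = {m/2 − r, m/2 − r + 1, …, m/2 − 1, m/2}. Then the circulant graph G = C_m(S) does not admit an open XOR-magic labeling: there is no bijection ℓ from the vertices of G to (Z_2)^n such that for every vertex v the sum in (Z_2)^n of ℓ(u) over all neighbors u of v is the zero vector. -/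
lemma my_castneg (m s : ℕ) (hs : s ≤ m) : ((m - s : ℕ) : ZMod m) = -(s : ZMod m) := by
  have h1 : ((m - s : ℕ) : ZMod m) + (s : ZMod m) = ((m - s + s : ℕ) : ZMod m) := by push_cast; ring
  rw [Nat.sub_add_cancel hs] at h1
  simp only [ZMod.natCast_self] at h1
  exact eq_neg_of_add_eq_zero_left h1

lemma my_castinj (m a b : ℕ) [NeZero m] (ha : a < m) (hb : b < m)
    (hab : (a : ZMod m) = (b : ZMod m)) : a = b := by
  have := congrArg ZMod.val hab
  rwa [ZMod.val_cast_of_lt ha, ZMod.val_cast_of_lt hb] at this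

lemma my_adj_iff (m h r : ℕ) [NeZero m] (hm : m = 2 * h) (hr1 : 1 ≤ r) (hrh : r + 1 ≤ h)
    (v u : ZMod m) :
    (circulant m (Set.Icc (h - r) h)).Adj v u ↔
      ∃ s ∈ Finset.Icc (h - r) (h + r), u = v + (s : ZMod m) := by
  rw [circulant, SimpleGraph.fromRel_adj]
  constructor
  · rintro ⟨hne, ⟨s, hs, heq⟩ | ⟨s, hs, heq⟩⟩
    · rw [Set.mem_Icc] at hs
      refine ⟨m - s, Finset.mem_Icc.mpr ⟨by omega, by omega⟩, ?_⟩
      rw [my_castneg m s (by omega)]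
      have : u = v - (s : ZMod m) := by rw [← heq]; ring
      rw [this]; ring
    · rw [Set.mem_Icc] at hs
      refine ⟨s, Finset.mem_Icc.mpr ⟨by omega, by omega⟩, by rw [← heq]; ring⟩
  · rintro ⟨s, hs, rfl⟩
    rw [Finset.mem_Icc] at hs
    constructor
    · intro heq'
      have h0 : (s : ZMod m) = 0 := (left_eq_add.mp heq')
      have hdvd : m ∣ s := (ZMod.natCast_eq_zero_iff s m).mp h0
      have hsne : s ≠ 0 := by omega
      have := Nat.le_of_dvd (by omega) hdvd
      omega
    · by_cases hsh : s ≤ h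
      · exact Or.inr ⟨s, Set.mem_Icc.mpr ⟨by omega, hsh⟩, by ring⟩
      · refine Or.inl ⟨m - s, Set.mem_Icc.mpr ⟨by omega, by omega⟩, ?_⟩
        rw [my_castneg m s (by omega)]; ring

lemma my_sum_eq (m h r : ℕ) [NeZero m] (hm : m = 2 * h) (hr1 : 1 ≤ r) (hrh : r + 1 ≤ h)
    {α : Type*} [AddCommMonoid α] (f : ZMod m → α) (v : ZMod m) :
    ∑ᶠ u ∈ (circulant m (Set.Icc (h - r) h)).neighborSet v, f u
      = ∑ s ∈ Finset.Icc (h - r) (h + r), f (v + (s : ZMod m)) := by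
  have hset : (circulant m (Set.Icc (h - r) h)).neighborSet v
      = ↑((Finset.Icc (h - r) (h + r)).image (fun s : ℕ => v + (s : ZMod m))) := by
    ext u
    simp only [SimpleGraph.mem_neighborSet, my_adj_iff m h r hm hr1 hrh, Finset.coe_image,
      Set.mem_image, Finset.mem_coe]
    constructor
    · rintro ⟨s, hs, e⟩; exact ⟨s, hs, e.symm⟩
    · rintro ⟨s, hs, e⟩; exact ⟨s, hs, e.symm⟩
  rw [hset, finsum_mem_coe_finset, Finset.sum_image]
  intro x hx y hy hxy
  rw [Finset.mem_coe, Finset.mem_Icc] at hx hy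
  exact my_castinj m x y (by omega) (by omega) (add_left_cancel hxy)

lemma my_shift (m h r : ℕ) [NeZero m] (hm : m = 2 * h) (hr1 : 1 ≤ r) (hrh : r + 1 ≤ h)
    {α : Type*} [AddCommGroup α] (f : ZMod m → α)
    (h0 : ∀ v : ZMod m, ∑ s ∈ Finset.Icc (h - r) (h + r), f (v + (s : ZMod m)) = 0) :
    ∀ x : ZMod m, f x = f (x + ((2 * r + 1 : ℕ) : ZMod m)) := by
  intro x
  set a := h - r with ha
  set b := h + r with hb
  set w := x - ((a : ℕ) : ZMod m) with hw
  set g : ℕ → α := fun s => f (w + (s : ZMod m)) with hg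
  have A : ∑ s ∈ Finset.Icc a b, g s = 0 := h0 w
  have B : ∑ s ∈ Finset.Icc a b, g (s + 1) = 0 := by
    have h1 := h0 (w + 1)
    rw [← h1]
    refine Finset.sum_congr rfl fun s _ => ?_
    simp only [hg]
    congr 1
    push_cast
    ring
  have himg : Finset.Icc (a + 1) (b + 1) = (Finset.Icc a b).image (· + 1) := by
    ext x
    simp only [Finset.mem_image, Finset.mem_Icc]
    constructor
    · intro hx; exact ⟨x - 1, by omega, by omega⟩
    · rintro ⟨y, hy, rfl⟩; omega
  have B'' : ∑ s ∈ Finset.Icc (a + 1) (b + 1), g s = 0 := by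
    rw [himg, Finset.sum_image (fun x _ y _ hxy => by omega)]
    exact B
  have hins : Finset.Icc a b = insert a (Finset.Icc (a + 1) b) := by
    ext x; simp only [Finset.mem_insert, Finset.mem_Icc]; omega
  have hnot : a ∉ Finset.Icc (a + 1) b := by simp
  have A' : g a + ∑ s ∈ Finset.Icc (a + 1) b, g s = 0 := by
    rwa [hins, Finset.sum_insert hnot] at A
  have B''' : (∑ s ∈ Finset.Icc (a + 1) b, g s) + g (b + 1) = 0 := by
    rwa [Finset.sum_Icc_succ_top (by omega) g] at B''
  have key : g a = g (b + 1) := by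
    rw [eq_neg_of_add_eq_zero_left A', eq_neg_of_add_eq_zero_right B''']
  have e1 : g a = f x := by
    rw [hg]; congr 1; rw [hw]; ring
  have e2 : g (b + 1) = f (x + ((2 * r + 1 : ℕ) : ZMod m)) := by
    rw [hg]; congr 1
    have hnat : b + 1 = a + (2 * r + 1) := by omega
    rw [hw, hnat]
    push_cast
    ring
  rw [← e1, key, e2]

theorem stmt_5 (n r : ℕ) (hn : 2 < n) (hr : 1 ≤ r) (hr' : r ≤ 2 ^ (n - 1) - 1) :
    ¬ ∃ ℓ : ZMod (2 ^ n) ≃ (Fin n → ZMod 2),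
        ∀ v, ∑ᶠ u ∈ (circulant (2 ^ n)
            (Set.Icc (2 ^ (n - 1) - r) (2 ^ (n - 1)))).neighborSet v, ℓ u = 0 := by
  rintro ⟨ℓ, hℓ⟩
  have hm : 2 ^ n = 2 * 2 ^ (n - 1) := by
    rw [← pow_succ']
    congr 1
    omega
  have hh4 : 4 ≤ 2 ^ (n - 1) := by
    calc 4 = 2 ^ 2 := by norm_num
    _ ≤ 2 ^ (n - 1) := Nat.pow_le_pow_right (by norm_num) (by omega)
  haveI : NeZero (2 ^ n) := ⟨by positivity⟩
  have hrh : r + 1 ≤ 2 ^ (n - 1) := by omega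
  have h0 : ∀ v : ZMod (2 ^ n),
      ∑ s ∈ Finset.Icc (2 ^ (n - 1) - r) (2 ^ (n - 1) + r), ℓ (v + (s : ZMod (2 ^ n))) = 0 :=
    fun v => by rw [← my_sum_eq (2 ^ n) (2 ^ (n - 1)) r hm hr hrh]; exact hℓ v
  have hstep := my_shift (2 ^ n) (2 ^ (n - 1)) r hm hr hrh ℓ h0
  set c : ZMod (2 ^ n) := ((2 * r + 1 : ℕ) : ZMod (2 ^ n)) with hc
  have hmul : ∀ (k : ℕ) (x : ZMod (2 ^ n)), ℓ x = ℓ (x + (k : ZMod (2 ^ n)) * c) := by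
    intro k
    induction k with
    | zero => intro x; simp
    | succ k ih =>
      intro x
      rw [ih x, hstep (x + (k : ZMod (2 ^ n)) * c)]
      congr 1
      push_cast
      ring
  have hu : IsUnit c := by
    rw [hc]
    refine (ZMod.isUnit_iff_coprime _ _).mpr (Nat.Coprime.pow_right _ ?_)
    exact Nat.coprime_two_right.mpr ⟨r, by ring⟩
  have hconst : ∀ y : ZMod (2 ^ n), ℓ 0 = ℓ y := by
    intro y
    obtain ⟨b, hb1, hb2⟩ := isUnit_iff_exists.mp hu
    have hcy : (y * b) * c = y := by rw [mul_assoc, hb2, mul_one]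
    have := hmul (y * b).val 0
    rwa [ZMod.natCast_val, ZMod.cast_id, hcy, zero_add] at this
  have h01 : (0 : ZMod (2 ^ n)) = 1 := ℓ.injective (hconst 1)
  haveI : Fact (1 < 2 ^ n) := ⟨by omega⟩
  exact zero_ne_one h01
end

section
/- Let m = 2^n with n ≥ 3. Then the circulant graph C_m({1, m/2 − 2, m/2}) is isomorphic (as a simple graph) to the circulant graph C_m({m/2 − 2, m/2 − 1, m/2}); an isomorphism is given by mapping vertex i to i if i is even and to (i + m/2) mod m if i is odd. -/
theorem stmt_6 (n : ℕ) (hn : 3 ≤ n) :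
    ∃ e : circulant (2 ^ n) {1, 2 ^ (n - 1) - 2, 2 ^ (n - 1)} ≃g
          circulant (2 ^ n) {2 ^ (n - 1) - 2, 2 ^ (n - 1) - 1, 2 ^ (n - 1)},
      ∀ i : ZMod (2 ^ n),
        e i = if Even i.val then i else i + (2 ^ (n - 1) : ℕ) := by
  haveI : NeZero (2 ^ n) := ⟨pow_ne_zero n two_ne_zero⟩
  have hn0 : n ≠ 0 := by omega
  have h4 : 4 ≤ 2 ^ (n - 1) := by
    calc (4 : ℕ) = 2 ^ 2 := rfl
    _ ≤ 2 ^ (n - 1) := Nat.pow_le_pow_right (by norm_num) (by omega)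
  set H : ZMod (2 ^ n) := ((2 ^ (n - 1) : ℕ) : ZMod (2 ^ n)) with hHdef
  have hpow : 2 ^ (n - 1) + 2 ^ (n - 1) = 2 ^ n := by
    have h1 : n - 1 + 1 = n := by omega
    calc 2 ^ (n - 1) + 2 ^ (n - 1) = 2 ^ (n - 1) * 2 := by ring
    _ = 2 ^ (n - 1 + 1) := (pow_succ 2 (n - 1)).symm
    _ = 2 ^ n := by rw [h1]
  have hHH : H + H = 0 := by
    rw [hHdef, ← Nat.cast_add, hpow, ZMod.natCast_self]
  have hnegH : -H = H := neg_eq_of_add_eq_zero_left hHH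
  -- parity ring hom
  set P : ZMod (2 ^ n) →+* ZMod 2 := ZMod.castHom (dvd_pow_self 2 hn0) (ZMod 2) with hPdef
  have hPval : ∀ a : ZMod (2 ^ n), P a = (a.val : ZMod 2) := fun a => by
    rw [hPdef, ZMod.castHom_apply, ZMod.natCast_val]
  have heven : ∀ a : ZMod (2 ^ n), Even a.val ↔ P a = 0 := fun a => by
    rw [hPval, ZMod.natCast_eq_zero_iff, even_iff_two_dvd]
  have htwo : ∀ x : ZMod 2, x ≠ 0 → x = 1 := by decide
  have hodd : ∀ a : ZMod (2 ^ n), ¬ Even a.val → P a = 1 := fun a ha =>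
    htwo _ (fun h => ha ((heven a).mpr h))
  have hPH : P H = 0 := by
    rw [hHdef, map_natCast, ZMod.natCast_eq_zero_iff]
    exact dvd_pow_self 2 (by omega)
  have hPC2 : P ((2 ^ (n - 1) - 2 : ℕ) : ZMod (2 ^ n)) = 0 := by
    rw [map_natCast, ZMod.natCast_eq_zero_iff]
    exact Nat.dvd_sub (dvd_pow_self 2 (by omega)) dvd_rfl
  have hPC1 : P ((2 ^ (n - 1) - 1 : ℕ) : ZMod (2 ^ n)) = 1 := by
    rw [map_natCast]
    have hd : 2 ∣ 2 ^ (n - 1) := dvd_pow_self 2 (by omega)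
    have hm : (2 ^ (n - 1) - 1) % 2 = 1 := by omega
    rw [← ZMod.natCast_mod, hm, Nat.cast_one]
  have hC1 : ((2 ^ (n - 1) - 1 : ℕ) : ZMod (2 ^ n)) = H - 1 := by
    rw [Nat.cast_sub (by omega), Nat.cast_one, hHdef]
  -- the map
  set f : ZMod (2 ^ n) → ZMod (2 ^ n) :=
    fun i => if Even i.val then i else i + ((2 ^ (n - 1) : ℕ) : ZMod (2 ^ n)) with hf
  have hparH : ∀ a : ZMod (2 ^ n), Even (a + H).val ↔ Even a.val := fun a => by
    rw [heven, heven, map_add, hPH, add_zero]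
  have hfeven : ∀ a : ZMod (2 ^ n), Even a.val → f a = a := fun a ha => by
    rw [hf]; simp [ha]
  have hfodd : ∀ a : ZMod (2 ^ n), ¬ Even a.val → f a = a + H := fun a ha => by
    rw [hf]; simp [ha, hHdef]
  have hinv : Function.Involutive f := by
    intro i
    by_cases hi : Even i.val
    · rw [hfeven i hi, hfeven i hi]
    · have h2 : ¬ Even (i + H).val := fun h => hi ((hparH i).mp h)
      rw [hfodd i hi, hfodd _ h2, add_assoc, hHH, add_zero]
  -- key relation equivalence lemmas
  have L0 : ∀ d : ZMod (2 ^ n), P d = 0 →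
      (((d = ((2 ^ (n - 1) - 2 : ℕ) : ZMod (2 ^ n)) ∨
         d = ((2 ^ (n - 1) - 1 : ℕ) : ZMod (2 ^ n)) ∨
         d = ((2 ^ (n - 1) : ℕ) : ZMod (2 ^ n))) ∨
        (-d = ((2 ^ (n - 1) - 2 : ℕ) : ZMod (2 ^ n)) ∨
         -d = ((2 ^ (n - 1) - 1 : ℕ) : ZMod (2 ^ n)) ∨
         -d = ((2 ^ (n - 1) : ℕ) : ZMod (2 ^ n)))) ↔
       ((d = 1 ∨ d = ((2 ^ (n - 1) - 2 : ℕ) : ZMod (2 ^ n)) ∨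
         d = ((2 ^ (n - 1) : ℕ) : ZMod (2 ^ n))) ∨
        (-d = 1 ∨ -d = ((2 ^ (n - 1) - 2 : ℕ) : ZMod (2 ^ n)) ∨
         -d = ((2 ^ (n - 1) : ℕ) : ZMod (2 ^ n))))) := by
    intro d hd
    have k1 : d ≠ ((2 ^ (n - 1) - 1 : ℕ) : ZMod (2 ^ n)) := fun h => by
      rw [h, hPC1] at hd; exact one_ne_zero hd
    have k2 : -d ≠ ((2 ^ (n - 1) - 1 : ℕ) : ZMod (2 ^ n)) := fun h => by
      have : P (-d) = 1 := by rw [h, hPC1]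
      rw [map_neg, hd, neg_zero] at this; exact one_ne_zero this.symm
    have k3 : d ≠ 1 := fun h => by rw [h, map_one] at hd; exact one_ne_zero hd
    have k4 : -d ≠ 1 := fun h => by
      have : P (-d) = 1 := by rw [h, map_one]
      rw [map_neg, hd, neg_zero] at this; exact one_ne_zero this.symm
    constructor
    · rintro ((h | h | h) | (h | h | h))
      · exact Or.inl (Or.inr (Or.inl h))
      · exact absurd h k1
      · exact Or.inl (Or.inr (Or.inr h))
      · exact Or.inr (Or.inr (Or.inl h))
      · exact absurd h k2
      · exact Or.inr (Or.inr (Or.inr h))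
    · rintro ((h | h | h) | (h | h | h))
      · exact absurd h k3
      · exact Or.inl (Or.inl h)
      · exact Or.inl (Or.inr (Or.inr h))
      · exact absurd h k4
      · exact Or.inr (Or.inl h)
      · exact Or.inr (Or.inr (Or.inr h))
  have L1 : ∀ d : ZMod (2 ^ n), P d = 1 →
      ((((d + H) = ((2 ^ (n - 1) - 2 : ℕ) : ZMod (2 ^ n)) ∨
         (d + H) = ((2 ^ (n - 1) - 1 : ℕ) : ZMod (2 ^ n)) ∨
         (d + H) = ((2 ^ (n - 1) : ℕ) : ZMod (2 ^ n))) ∨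
        (-(d + H) = ((2 ^ (n - 1) - 2 : ℕ) : ZMod (2 ^ n)) ∨
         -(d + H) = ((2 ^ (n - 1) - 1 : ℕ) : ZMod (2 ^ n)) ∨
         -(d + H) = ((2 ^ (n - 1) : ℕ) : ZMod (2 ^ n)))) ↔
       ((d = 1 ∨ d = ((2 ^ (n - 1) - 2 : ℕ) : ZMod (2 ^ n)) ∨
         d = ((2 ^ (n - 1) : ℕ) : ZMod (2 ^ n))) ∨
        (-d = 1 ∨ -d = ((2 ^ (n - 1) - 2 : ℕ) : ZMod (2 ^ n)) ∨
         -d = ((2 ^ (n - 1) : ℕ) : ZMod (2 ^ n))))) := by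
    intro d hd
    have hD : P (d + H) = 1 := by rw [map_add, hPH, add_zero, hd]
    have hDn : P (-(d + H)) = 1 := by rw [map_neg, hD]; decide
    have i1 : d + H ≠ ((2 ^ (n - 1) - 2 : ℕ) : ZMod (2 ^ n)) := fun h => by
      rw [h, hPC2] at hD; exact one_ne_zero hD.symm
    have i2 : d + H ≠ ((2 ^ (n - 1) : ℕ) : ZMod (2 ^ n)) := fun h => by
      rw [← hHdef] at h; rw [h, hPH] at hD; exact one_ne_zero hD.symm
    have i3 : -(d + H) ≠ ((2 ^ (n - 1) - 2 : ℕ) : ZMod (2 ^ n)) := fun h => by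
      rw [h, hPC2] at hDn; exact one_ne_zero hDn.symm
    have i4 : -(d + H) ≠ ((2 ^ (n - 1) : ℕ) : ZMod (2 ^ n)) := fun h => by
      rw [← hHdef] at h; rw [h, hPH] at hDn; exact one_ne_zero hDn.symm
    have j1 : d ≠ ((2 ^ (n - 1) - 2 : ℕ) : ZMod (2 ^ n)) := fun h => by
      rw [h, hPC2] at hd; exact one_ne_zero hd.symm
    have j2 : d ≠ ((2 ^ (n - 1) : ℕ) : ZMod (2 ^ n)) := fun h => by
      rw [← hHdef] at h; rw [h, hPH] at hd; exact one_ne_zero hd.symm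
    have hdn : P (-d) = 1 := by rw [map_neg, hd]; decide
    have j3 : -d ≠ ((2 ^ (n - 1) - 2 : ℕ) : ZMod (2 ^ n)) := fun h => by
      rw [h, hPC2] at hdn; exact one_ne_zero hdn.symm
    have j4 : -d ≠ ((2 ^ (n - 1) : ℕ) : ZMod (2 ^ n)) := fun h => by
      rw [← hHdef] at h; rw [h, hPH] at hdn; exact one_ne_zero hdn.symm
    have pA : (d + H) = ((2 ^ (n - 1) - 1 : ℕ) : ZMod (2 ^ n)) ↔ -d = 1 := by
      rw [hC1]
      constructor
      · intro h; linear_combination -h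
      · intro h; linear_combination -h
    have pB : -(d + H) = ((2 ^ (n - 1) - 1 : ℕ) : ZMod (2 ^ n)) ↔ d = 1 := by
      rw [hC1]
      constructor
      · intro h; linear_combination -h - hHH
      · intro h; linear_combination -h - hHH
    constructor
    · rintro ((h | h | h) | (h | h | h))
      · exact absurd h i1
      · exact Or.inr (Or.inl (pA.mp h))
      · exact absurd h i2
      · exact absurd h i3
      · exact Or.inl (Or.inl (pB.mp h))
      · exact absurd h i4
    · rintro ((h | h | h) | (h | h | h))
      · exact Or.inr (Or.inr (Or.inl (pB.mpr h)))
      · exact absurd h j1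
      · exact absurd h j2
      · exact Or.inl (Or.inr (Or.inl (pA.mpr h)))
      · exact absurd h j3
      · exact absurd h j4
  -- adjacency preservation
  have key : ∀ i j : ZMod (2 ^ n),
      (circulant (2 ^ n) {2 ^ (n - 1) - 2, 2 ^ (n - 1) - 1, 2 ^ (n - 1)}).Adj (f i) (f j) ↔
      (circulant (2 ^ n) {1, 2 ^ (n - 1) - 2, 2 ^ (n - 1)}).Adj i j := by
    intro i j
    simp only [circulant, SimpleGraph.fromRel_adj, Set.mem_insert_iff, Set.mem_singleton_iff,
      exists_eq_or_imp, exists_eq_left, ne_eq, hinv.injective.ne_iff]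
    refine and_congr Iff.rfl ?_
    push_cast
    by_cases hi : Even i.val <;> by_cases hj : Even j.val
    · rw [hfeven i hi, hfeven j hj]
      have hpar : P (i - j) = 0 := by
        rw [map_sub, (heven i).mp hi, (heven j).mp hj, sub_zero]
      have := L0 (i - j) hpar
      push_cast at this
      rw [show j - i = -(i - j) from (neg_sub i j).symm]
      exact this
    · rw [hfeven i hi, hfodd j hj]
      have hpar : P (i - j) = 1 := by
        rw [map_sub, (heven i).mp hi, hodd j hj]; decide
      have e1 : i - (j + H) = (i - j) + H := by linear_combination -hHH
      have e2 : (j + H) - i = -((i - j) + H) := by linear_combination hHH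
      have := L1 (i - j) hpar
      push_cast at this
      rw [e1, e2, show j - i = -(i - j) from (neg_sub i j).symm] at *
      exact this
    · rw [hfodd i hi, hfeven j hj]
      have hpar : P (i - j) = 1 := by
        rw [map_sub, hodd i hi, (heven j).mp hj, sub_zero]
      have e1 : (i + H) - j = (i - j) + H := by ring
      have e2 : j - (i + H) = -((i - j) + H) := by ring
      have := L1 (i - j) hpar
      push_cast at this
      rw [e1, e2, show j - i = -(i - j) from (neg_sub i j).symm] at *
      exact this
    · rw [hfodd i hi, hfodd j hj]
      have hpar : P (i - j) = 0 := by
        rw [map_sub, hodd i hi, hodd j hj, sub_self]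
      have e1 : (i + H) - (j + H) = i - j := by ring
      have e2 : (j + H) - (i + H) = -(i - j) := by ring
      have := L0 (i - j) hpar
      push_cast at this
      rw [e1, e2, show j - i = -(i - j) from (neg_sub i j).symm] at *
      exact this
  refine ⟨⟨hinv.toPerm, fun {a b} => key a b⟩, fun i => rfl⟩
end

section
/- Let m = 2^n with n ≥ 3 and let S = {1, m/2 − 2, m/2} = {1, 2^{n−1} − 2, 2^{n−1}}. Then the circulant graph G = C_m(S) does not admit an open XOR-magic labeling: there is no bijection ℓ from the vertices of G to (Z_2)^n such that for every vertex v the sum in (Z_2)^n of ℓ(u) over all neighbors u of v is the zero vector. -/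
lemma sum_sym_diag {α : Type*} [DecidableEq α] (s : Finset α) (F : α → α → ZMod 2)
    (hF : ∀ d e, F d e = F e d) :
    ∑ d ∈ s, ∑ e ∈ s, F d e = ∑ d ∈ s, F d d := by
  have h1 : ∑ d ∈ s, ∑ e ∈ s, F d e = ∑ p ∈ s ×ˢ s, F p.1 p.2 := by
    rw [Finset.sum_product]
  have h3 : ∑ p ∈ s.offDiag, F p.1 p.2 = 0 := by
    apply Finset.sum_involution (fun p _ => Prod.swap p)
    · intro p hp
      have : F p.1 p.2 = F p.2 p.1 := hF _ _
      simp [Prod.swap, this, CharTwo.add_self_eq_zero]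
    · intro p hp h
      simp only [Finset.mem_offDiag] at hp
      intro hc
      have h1 : p.2 = p.1 := congrArg Prod.fst hc
      exact hp.2.2 h1.symm
    · intro p hp
      simp only [Finset.mem_offDiag] at hp ⊢
      exact ⟨hp.2.1, hp.1, Ne.symm hp.2.2⟩
    · intro p hp; simp
  rw [h1, ← Finset.diag_union_offDiag s, Finset.sum_union (Finset.disjoint_diag_offDiag s), h3,
    add_zero, Finset.sum_diag]

lemma key_frob {m : ℕ} (g : ZMod m → ZMod 2) {ι : Type*} [DecidableEq ι]
    (D : Finset ι) (δ : ι → ZMod m)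
    (H : ∀ v, ∑ d ∈ D, g (v + δ d) = 0) :
    ∀ k, ∀ v, ∑ d ∈ D, g (v + 2 ^ k * δ d) = 0 := by
  intro k
  induction k with
  | zero => intro v; simpa using H v
  | succ k ih =>
    intro v
    have h0 : ∑ d ∈ D, ∑ e ∈ D, g (v + 2 ^ k * δ d + 2 ^ k * δ e) = 0 :=
      Finset.sum_eq_zero fun d _ => ih (v + 2 ^ k * δ d)
    have h1 := sum_sym_diag D (fun d e => g (v + 2 ^ k * δ d + 2 ^ k * δ e))
      (by intro d e; ring_nf)
    rw [h0] at h1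
    calc ∑ d ∈ D, g (v + 2 ^ (k + 1) * δ d)
        = ∑ d ∈ D, g (v + 2 ^ k * δ d + 2 ^ k * δ d) := by
          apply Finset.sum_congr rfl; intro d _; congr 1; ring
      _ = 0 := h1.symm

set_option maxHeartbeats 1000000 in
theorem stmt_7 (n : ℕ) (hn : 3 ≤ n) :
    ¬ ∃ ℓ : ZMod (2 ^ n) ≃ (Fin n → ZMod 2),
        ∀ v, ∑ᶠ u ∈ (circulant (2 ^ n)
            {1, 2 ^ (n - 1) - 2, 2 ^ (n - 1)}).neighborSet v, ℓ u = 0 := by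
  rintro ⟨ℓ, hℓ⟩
  have hh : 4 ≤ 2 ^ (n - 1) := by
    calc 4 = 2 ^ 2 := by norm_num
    _ ≤ 2 ^ (n - 1) := Nat.pow_le_pow_right (by norm_num) (by omega)
  have hm : 2 ^ n = 2 * 2 ^ (n - 1) := by
    rw [← pow_succ']; congr 1; omega
  haveI : NeZero (2 ^ n) := ⟨by positivity⟩
  -- the five shifts, as natural numbers in [1, 2^n)
  set Dn : Finset ℕ := {1, 2 ^ n - 1, 2 ^ (n - 1) - 2, 2 ^ (n - 1) + 2, 2 ^ (n - 1)} with hDn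
  have hmem : ∀ a ∈ Dn, 0 < a ∧ a < 2 ^ n := by
    intro a ha
    simp only [hDn, Finset.mem_insert, Finset.mem_singleton] at ha
    rcases ha with h | h | h | h | h <;> subst h <;> omega
  have hnz : ∀ a : ℕ, 0 < a → a < 2 ^ n → (a : ZMod (2 ^ n)) ≠ 0 := by
    intro a h1 h2 hc
    have hv := ZMod.val_cast_of_lt h2
    rw [hc, ZMod.val_zero] at hv
    omega
  have hinj : ∀ a ∈ Dn, ∀ b ∈ Dn, (a : ZMod (2 ^ n)) = (b : ZMod (2 ^ n)) → a = b := by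
    intro a ha b hb hab
    have h1 := (hmem a ha).2
    have h2 := (hmem b hb).2
    rw [← ZMod.val_cast_of_lt h1, ← ZMod.val_cast_of_lt h2, hab]
  have hcard : Dn.card = 5 := by
    rw [hDn]
    rw [Finset.card_insert_of_notMem
        (by simp only [Finset.mem_insert, Finset.mem_singleton, not_or]; omega),
      Finset.card_insert_of_notMem
        (by simp only [Finset.mem_insert, Finset.mem_singleton, not_or]; omega),
      Finset.card_insert_of_notMem
        (by simp only [Finset.mem_insert, Finset.mem_singleton, not_or]; omega),
      Finset.card_insert_of_notMem (by simp only [Finset.mem_singleton]; omega),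
      Finset.card_singleton]
  -- cast identities
  have castm : ((2 ^ n : ℕ) : ZMod (2 ^ n)) = 0 := ZMod.natCast_self _
  have A : ((2 ^ n - 1 : ℕ) : ZMod (2 ^ n)) = -1 := by
    have h : ((2 ^ n - 1 : ℕ) : ZMod (2 ^ n)) + ((1 : ℕ) : ZMod (2 ^ n)) = 0 := by
      rw [← Nat.cast_add, show 2 ^ n - 1 + 1 = 2 ^ n from by omega, castm]
    rw [Nat.cast_one] at h
    linear_combination h
  have B : ((2 ^ (n - 1) + 2 : ℕ) : ZMod (2 ^ n)) = -((2 ^ (n - 1) - 2 : ℕ) : ZMod (2 ^ n)) := by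
    have h : ((2 ^ (n - 1) + 2 : ℕ) : ZMod (2 ^ n)) + ((2 ^ (n - 1) - 2 : ℕ) : ZMod (2 ^ n)) = 0 := by
      rw [← Nat.cast_add, show 2 ^ (n - 1) + 2 + (2 ^ (n - 1) - 2) = 2 ^ n from by omega, castm]
    linear_combination h
  have C : ((2 ^ (n - 1) : ℕ) : ZMod (2 ^ n)) + ((2 ^ (n - 1) : ℕ) : ZMod (2 ^ n)) = 0 := by
    rw [← Nat.cast_add, show 2 ^ (n - 1) + 2 ^ (n - 1) = 2 ^ n from by omega, castm]
  -- neighbor set description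
  have mem_iff : ∀ v u : ZMod (2 ^ n),
      u ∈ (circulant (2 ^ n) {1, 2 ^ (n - 1) - 2, 2 ^ (n - 1)}).neighborSet v ↔
        ∃ a ∈ Dn, v + (a : ZMod (2 ^ n)) = u := by
    intro v u
    simp only [SimpleGraph.mem_neighborSet, circulant, SimpleGraph.fromRel_adj,
      Set.mem_insert_iff, Set.mem_singleton_iff, hDn, Finset.mem_insert, Finset.mem_singleton]
    constructor
    · rintro ⟨hne, h | h⟩ <;> obtain ⟨s, hs, hsu⟩ := h <;> rcases hs with rfl | rfl | rfl
      · refine ⟨2 ^ n - 1, by tauto, ?_⟩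
        rw [Nat.cast_one] at hsu
        rw [A]
        linear_combination hsu
      · exact ⟨2 ^ (n - 1) + 2, by tauto, by rw [B]; linear_combination hsu⟩
      · exact ⟨2 ^ (n - 1), by tauto, by linear_combination hsu + C⟩
      · refine ⟨1, by tauto, ?_⟩
        rw [Nat.cast_one] at hsu ⊢
        linear_combination -hsu
      · exact ⟨2 ^ (n - 1) - 2, by tauto, by linear_combination -hsu⟩
      · exact ⟨2 ^ (n - 1), by tauto, by linear_combination -hsu⟩
    · rintro ⟨a, ha, rfl⟩
      have hb : 0 < a ∧ a < 2 ^ n := by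
        rcases ha with rfl | rfl | rfl | rfl | rfl <;> omega
      have hane : (a : ZMod (2 ^ n)) ≠ 0 := hnz a hb.1 hb.2
      refine ⟨fun heq => hane (left_eq_add.mp heq), ?_⟩
      rcases ha with rfl | rfl | rfl | rfl | rfl
      · exact Or.inr ⟨1, Or.inl rfl, by ring⟩
      · exact Or.inl ⟨1, Or.inl rfl, by rw [A, Nat.cast_one]; ring⟩
      · exact Or.inr ⟨2 ^ (n - 1) - 2, Or.inr (Or.inl rfl), by ring⟩
      · exact Or.inl ⟨2 ^ (n - 1) - 2, Or.inr (Or.inl rfl), by rw [B]; ring⟩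
      · exact Or.inr ⟨2 ^ (n - 1), Or.inr (Or.inr rfl), by ring⟩
  -- the labeling sums over the five shifts
  have hsum : ∀ v, ∑ a ∈ Dn, ℓ (v + (a : ZMod (2 ^ n))) = 0 := by
    intro v
    have h1 : (circulant (2 ^ n) {1, 2 ^ (n - 1) - 2, 2 ^ (n - 1)}).neighborSet v =
        (↑(Finset.image (fun a : ℕ => v + (a : ZMod (2 ^ n))) Dn) : Set (ZMod (2 ^ n))) := by
      ext u
      rw [mem_iff v u]
      simp [Finset.mem_image]
    have h2 := hℓ v
    rw [h1, finsum_mem_coe_finset, Finset.sum_image] at h2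
    · exact h2
    · intro x hx y hy hxy
      exact hinj x hx y hy (by exact_mod_cast add_left_cancel hxy)
  -- every label is zero
  have hzero : ∀ u, ℓ u = 0 := by
    intro u
    funext i
    have H : ∀ v, ∑ a ∈ Dn, (fun w => ℓ w i) (v + (a : ZMod (2 ^ n))) = 0 := by
      intro v
      have := congrFun (hsum v) i
      simpa using this
    have hk := key_frob (fun w => ℓ w i) Dn (fun a => (a : ZMod (2 ^ n))) H n u
    have h2n : (2 : ZMod (2 ^ n)) ^ n = 0 := by
      have : ((2 : ℕ) : ZMod (2 ^ n)) ^ n = 0 := by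
        rw [← Nat.cast_pow, castm]
      exact_mod_cast this
    simp only [h2n, zero_mul, add_zero] at hk
    rw [Finset.sum_const, hcard] at hk
    have h5 : ∀ x : ZMod 2, 5 • x = x := by decide
    rw [h5] at hk
    exact hk
  -- contradiction with surjectivity
  have hx := ℓ.apply_symm_apply (fun _ => (1 : ZMod 2))
  rw [hzero] at hx
  have h01 : (0 : ZMod 2) = 1 := by
    have h := congrFun hx (⟨0, by omega⟩ : Fin n)
    simp only [Pi.zero_apply] at h; exact h
  exact absurd h01 (by decide)
end

section
/- For every n ≥ 2, the complement of the cycle C_{2^n} on 2^n vertices does not admit an open XOR-magic labeling: there is no bijection ℓ from its vertices to (Z_2)^n such that for every vertex v the sum in (Z_2)^n of ℓ(u) over all neighbors u of v (in the complement graph) is the zero vector. -/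
theorem stmt_8 (n : ℕ) (hn : 2 ≤ n) :
    ¬ ∃ ℓ : ZMod (2 ^ n) ≃ (Fin n → ZMod 2),
        ∀ v, ∑ᶠ u ∈ ((circulant (2 ^ n) {1})ᶜ).neighborSet v, ℓ u = 0 := by
  rintro ⟨ℓ, hℓ⟩
  haveI : NeZero (2 ^ n) := ⟨pow_ne_zero n two_ne_zero⟩
  have hm4 : 4 ≤ 2 ^ n := by
    calc (4 : ℕ) = 2 ^ 2 := rfl
    _ ≤ 2 ^ n := Nat.pow_le_pow_right (by norm_num) hn
  haveI : Fact (1 < 2 ^ n) := ⟨by omega⟩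
  have h1 : (1 : ZMod (2 ^ n)) ≠ 0 := one_ne_zero
  have h2 : (2 : ZMod (2 ^ n)) ≠ 0 := by
    intro h
    have : ((2 : ℕ) : ZMod (2 ^ n)) = 0 := by exact_mod_cast h
    rw [ZMod.natCast_eq_zero_iff] at this
    have := Nat.le_of_dvd (by norm_num) this
    omega
  -- characterize adjacency in the complement
  have hadj : ∀ v u : ZMod (2 ^ n),
      ((circulant (2 ^ n) {1})ᶜ).Adj v u ↔
        u ∉ ({v - 1, v, v + 1} : Finset (ZMod (2 ^ n))) := by
    intro v u
    simp only [circulant, SimpleGraph.compl_adj, SimpleGraph.fromRel_adj,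
      Set.mem_singleton_iff, Finset.mem_insert, Finset.mem_singleton,
      exists_eq_left, Nat.cast_one, not_or, not_and, not_not]
    constructor
    · rintro ⟨hne, h⟩
      push_neg at h
      obtain ⟨hs1, hs2⟩ := h hne
      refine ⟨?_, fun hh => (hne hh.symm).elim, ?_⟩
      · intro hh; exact hs1 (by rw [hh]; ring)
      · intro hh; exact hs2 (by rw [hh]; ring)
    · rintro ⟨ha, hb, hc⟩
      refine ⟨fun hh => hb hh.symm, fun _ => ⟨?_, ?_⟩⟩
      · intro hh; exact ha (by linear_combination -hh)
      · intro hh; exact hc (by linear_combination hh)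
  -- rewrite each magic-sum condition as a Finset sum
  have hv : ∀ v : ZMod (2 ^ n),
      ∑ u ∈ Finset.univ \ ({v - 1, v, v + 1} : Finset (ZMod (2 ^ n))), ℓ u = 0 := by
    intro v
    have h := hℓ v
    rw [finsum_mem_eq_finite_toFinset_sum _ (Set.toFinite _)] at h
    rw [← h]
    apply Finset.sum_congr _ (fun _ _ => rfl)
    ext u
    simp only [Set.Finite.mem_toFinset, SimpleGraph.mem_neighborSet, hadj,
      Finset.mem_sdiff, Finset.mem_univ, true_and]
  -- distinctness of v-1, v, v+1
  have hd1 : ∀ v : ZMod (2 ^ n), v - 1 ≠ v := fun v hh => h1 (by linear_combination -hh)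
  have hd2 : ∀ v : ZMod (2 ^ n), v - 1 ≠ v + 1 := fun v hh => h2 (by linear_combination -hh)
  have hd3 : ∀ v : ZMod (2 ^ n), v ≠ v + 1 := fun v hh => h1 (by linear_combination -hh)
  -- every window of three consecutive labels sums to the total
  set T := ∑ u, ℓ u with hT
  have key : ∀ v : ZMod (2 ^ n), ℓ (v - 1) + ℓ v + ℓ (v + 1) = T := by
    intro v
    have hsub : ({v - 1, v, v + 1} : Finset (ZMod (2 ^ n))) ⊆ Finset.univ :=
      Finset.subset_univ _
    have hs := Finset.sum_sdiff (f := ℓ) hsub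
    rw [hv v, zero_add] at hs
    rw [hT, ← hs]
    rw [Finset.sum_insert (by simp [hd1 v, hd2 v]),
      Finset.sum_insert (by simp [hd3 v]), Finset.sum_singleton, add_assoc]
  -- hence labels are 3-periodic
  have per3 : ∀ v : ZMod (2 ^ n), ℓ (v + 3) = ℓ v := by
    intro v
    have e1 := key (v + 1)
    have e2 := key (v + 2)
    have r1 : v + 1 - 1 = v := by ring
    have r2 : v + 1 + 1 = v + 2 := by ring
    have r3 : v + 2 - 1 = v + 1 := by ring
    have r4 : v + 2 + 1 = v + 3 := by ring
    rw [r1, r2] at e1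
    rw [r3, r4] at e2
    linear_combination e2 - e1
  have per : ∀ (k : ℕ) (v : ZMod (2 ^ n)), ℓ (v + 3 * (k : ZMod (2 ^ n))) = ℓ v := by
    intro k
    induction k with
    | zero => intro v; simp
    | succ k ih =>
      intro v
      have e : v + 3 * ((k + 1 : ℕ) : ZMod (2 ^ n)) = (v + 3) + 3 * (k : ZMod (2 ^ n)) := by
        push_cast; ring
      rw [e, ih, per3]
  -- 3 is a unit mod 2^n, so 3-periodicity forces constancy
  have hu : IsUnit (3 : ZMod (2 ^ n)) := by
    have hc : Nat.Coprime 3 (2 ^ n) := Nat.Coprime.pow_right n (by decide)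
    have := (ZMod.isUnit_iff_coprime 3 (2 ^ n)).mpr hc
    exact_mod_cast this
  set k := ((3 : ZMod (2 ^ n))⁻¹).val with hk
  have hk1 : (3 : ZMod (2 ^ n)) * (k : ZMod (2 ^ n)) = 1 := by
    rw [hk, ZMod.natCast_val, ZMod.cast_id]
    exact ZMod.mul_inv_of_unit _ hu
  have h01 : ℓ (0 + 3 * (k : ZMod (2 ^ n))) = ℓ 0 := per k 0
  rw [zero_add, hk1] at h01
  exact h1 (ℓ.injective h01)
end

section
/- Let m ≥ 2, let n = 2^m, and let r ∈ {1, …, n/2 − 1}. Then the complement of the r-th power of the cycle C_n^{(r)} = C_n({1,2,…,r}) does not admit an open XOR-magic labeling: there is no bijection ℓ from its vertices to (Z_2)^m such that for every vertex v the sum in (Z_2)^m of ℓ(u) over all neighbors u of v (in the complement graph) is the zero vector. -/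
lemma total_sum_zero (m : ℕ) (hm : 2 ≤ m) : ∑ x : Fin m → ZMod 2, x = 0 := by
  funext i
  rw [Finset.sum_apply]
  obtain ⟨j, hj⟩ : ∃ j : Fin m, j ≠ i := by
    have : Nontrivial (Fin m) := Fin.nontrivial_iff_two_le.mpr hm
    exact exists_ne i
  refine Finset.sum_ninvolution (fun x => Function.update x j (x j + 1)) ?_ ?_
    (fun _ => Finset.mem_univ _) ?_
  · intro x
    show x i + Function.update x j (x j + 1) i = 0
    rw [Function.update_of_ne (Ne.symm hj)]
    exact CharTwo.add_self_eq_zero _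
  · intro x _ h
    have := congrFun h j
    simp at this
  · intro x
    beta_reduce
    funext k
    by_cases hk : k = j
    · subst hk
      rw [Function.update_self, Function.update_self, add_assoc,
        show (1 + 1 : ZMod 2) = 0 by decide, add_zero]
    · rw [Function.update_of_ne hk, Function.update_of_ne hk]

lemma mem_ball_iff (n r : ℕ) [NeZero n] (hrn : 2 * r + 1 < n) (v u : ZMod n) :
    u ∈ (Finset.Icc (-(r : ℤ)) (r : ℤ)).image (fun j : ℤ => v + (j : ZMod n)) ↔
      u = v ∨ (circulant n (Set.Icc 1 r)).Adj v u := by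
  have hrltn : (r : ℤ) < (n : ℤ) := by exact_mod_cast (by omega : r < n)
  rw [Finset.mem_image]
  constructor
  · rintro ⟨j, hj, rfl⟩
    rw [Finset.mem_Icc] at hj
    rcases lt_trichotomy j 0 with hneg | rfl | hpos
    · right
      rw [circulant, SimpleGraph.fromRel_adj]
      refine ⟨?_, Or.inl ⟨(-j).toNat, ?_, ?_⟩⟩
      · intro h
        have hz : ((j : ZMod n)) = 0 := by
          have := (left_eq_add).mp h
          exact this
        rw [ZMod.intCast_zmod_eq_zero_iff_dvd] at hz
        have := Int.le_of_dvd (by omega) ((dvd_neg).mpr hz)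
        omega
      · simp only [Set.mem_Icc]; omega
      · have h' : (((-j).toNat : ℤ) : ZMod n) = ((-j : ℤ) : ZMod n) := by
          rw [Int.toNat_of_nonneg (by omega : (0:ℤ) ≤ -j)]
        push_cast at h'
        rw [h']; ring
    · exact Or.inl (by simp)
    · right
      rw [circulant, SimpleGraph.fromRel_adj]
      refine ⟨?_, Or.inr ⟨j.toNat, ?_, ?_⟩⟩
      · intro h
        have hz : ((j : ZMod n)) = 0 := (left_eq_add).mp h
        rw [ZMod.intCast_zmod_eq_zero_iff_dvd] at hz
        have := Int.le_of_dvd hpos hz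
        omega
      · simp only [Set.mem_Icc]; omega
      · have h' : ((j.toNat : ℤ) : ZMod n) = ((j : ℤ) : ZMod n) := by
          rw [Int.toNat_of_nonneg hpos.le]
        push_cast at h'
        rw [h']; ring
  · rintro (rfl | hadj)
    · exact ⟨0, by simp, by simp⟩
    · rw [circulant, SimpleGraph.fromRel_adj] at hadj
      obtain ⟨hne, ⟨s, hs, heq⟩ | ⟨s, hs, heq⟩⟩ := hadj
      · rw [Set.mem_Icc] at hs
        refine ⟨-(s : ℤ), by rw [Finset.mem_Icc]; omega, ?_⟩
        have : u = v - (s : ZMod n) := by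
          rw [eq_sub_iff_add_eq, ← eq_sub_iff_add_eq']
          exact heq.symm
        rw [this]; push_cast; ring
      · rw [Set.mem_Icc] at hs
        refine ⟨(s : ℤ), by rw [Finset.mem_Icc]; omega, ?_⟩
        have : u = v + (s : ZMod n) := by
          rw [← sub_eq_iff_eq_add'] ; exact heq
        rw [this]; push_cast; ring

theorem stmt_9 (m r : ℕ) (hm : 2 ≤ m) (hr : 1 ≤ r) (hr' : r ≤ 2 ^ (m - 1) - 1) :
    ¬ ∃ ℓ : ZMod (2 ^ m) ≃ (Fin m → ZMod 2),
        ∀ v, ∑ᶠ u ∈ ((circulant (2 ^ m) (Set.Icc 1 r))ᶜ).neighborSet v, ℓ u = 0 := by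
  classical
  rintro ⟨ℓ, hℓ⟩
  haveI : NeZero (2 ^ m) := ⟨pow_ne_zero m two_ne_zero⟩
  have hpow : 2 ^ (m - 1) * 2 = 2 ^ m := by
    rw [← pow_succ]
    congr 1
    omega
  have hpow1 : 2 ≤ 2 ^ (m - 1) := by
    calc 2 = 2 ^ 1 := (pow_one 2).symm
    _ ≤ 2 ^ (m - 1) := Nat.pow_le_pow_right (by norm_num) (by omega)
  have hrn : 2 * r + 1 < 2 ^ m := by omega
  -- the total sum is zero
  have htot : ∑ u : ZMod (2 ^ m), ℓ u = 0 := by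
    exact (Equiv.sum_comp ℓ (fun x => x)).trans (total_sum_zero m hm)
  -- the sum over each closed ball is zero
  have key : ∀ v : ZMod (2 ^ m), ∑ j ∈ Finset.Icc (-(r : ℤ)) (r : ℤ),
      ℓ (v + (j : ZMod (2 ^ m))) = 0 := by
    intro v
    set B : Finset (ZMod (2 ^ m)) :=
      (Finset.Icc (-(r : ℤ)) (r : ℤ)).image (fun j : ℤ => v + (j : ZMod (2 ^ m))) with hB
    have hset : ((circulant (2 ^ m) (Set.Icc 1 r))ᶜ).neighborSet v = ↑(Bᶜ) := by
      ext u
      simp only [SimpleGraph.mem_neighborSet, SimpleGraph.compl_adj, Finset.coe_compl,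
        Set.mem_compl_iff, Finset.mem_coe, hB, mem_ball_iff (2 ^ m) r hrn v u]
      constructor
      · rintro ⟨hne, hnadj⟩ (rfl | hadj)
        · exact hne rfl
        · exact hnadj hadj
      · intro h
        exact ⟨fun hvu => h (Or.inl hvu.symm), fun hadj => h (Or.inr hadj)⟩
    have hv := hℓ v
    rw [hset, finsum_mem_coe_finset] at hv
    have hsum : ∑ u ∈ B, ℓ u = 0 := by
      have := Finset.sum_compl_add_sum B (fun u => ℓ u)
      rw [hv, htot, zero_add] at this
      exact this
    rw [hB, Finset.sum_image ?inj] at hsum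
    · exact hsum
    case inj =>
      intro j1 hj1 j2 hj2 hEq
      rw [Finset.mem_coe, Finset.mem_Icc] at hj1 hj2
      have h0 : ((j1 - j2 : ℤ) : ZMod (2 ^ m)) = 0 := by
        push_cast
        rw [sub_eq_zero]
        exact add_left_cancel hEq
      rw [ZMod.intCast_zmod_eq_zero_iff_dvd] at h0
      rcases h0 with ⟨k, hk⟩
      have hn : ((2 ^ m : ℕ) : ℤ) = (2 : ℤ) ^ m := by push_cast; rfl
      have hbound : (r : ℤ) + (r : ℤ) < ((2 ^ m : ℕ) : ℤ) := by exact_mod_cast (by omega : r + r < 2 ^ m)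
      have hnn : (0 : ℤ) < ((2 ^ m : ℕ) : ℤ) := by positivity
      -- |j1 - j2| ≤ 2r < 2^m, so k = 0
      rcases lt_trichotomy k 0 with h | rfl | h
      · nlinarith
      · omega
      · nlinarith
  -- telescoping: ℓ is periodic with period 2r+1
  have per : ∀ w : ZMod (2 ^ m), ℓ (w + ((2 * r + 1 : ℕ) : ZMod (2 ^ m))) = ℓ w := by
    intro w
    have k1 := key (w + ((r : ℤ) : ZMod (2 ^ m)))
    have k2 := key (w + ((r : ℤ) : ZMod (2 ^ m)) + 1)
    -- rewrite k2 as a sum over Icc (-r+1) (r+1)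
    have k2' : ∑ j ∈ Finset.Icc (-(r : ℤ) + 1) ((r : ℤ) + 1),
        ℓ (w + ((r : ℤ) : ZMod (2 ^ m)) + (j : ZMod (2 ^ m))) = 0 := by
      rw [← Finset.map_add_right_Icc, Finset.sum_map]
      rw [← k2]
      apply Finset.sum_congr rfl
      intro j _
      congr 1
      simp only [addRightEmbedding_apply]
      push_cast
      ring
    -- decompose both sums
    have hle : -(r : ℤ) ≤ (r : ℤ) := by omega
    have d1 : Finset.Icc (-(r : ℤ)) (r : ℤ) = insert (-(r : ℤ)) (Finset.Icc (-(r : ℤ) + 1) (r : ℤ)) := by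
      ext j; simp only [Finset.mem_Icc, Finset.mem_insert]; omega
    have d2 : Finset.Icc (-(r : ℤ) + 1) ((r : ℤ) + 1)
        = insert ((r : ℤ) + 1) (Finset.Icc (-(r : ℤ) + 1) (r : ℤ)) := by
      ext j; simp only [Finset.mem_Icc, Finset.mem_insert]; omega
    rw [d1, Finset.sum_insert (by simp)] at k1
    rw [d2, Finset.sum_insert (by simp)] at k2'
    have hab := add_right_cancel (k1.trans k2'.symm)
    have e1 : w + ((r : ℤ) : ZMod (2 ^ m)) + ((-(r : ℤ) : ℤ) : ZMod (2 ^ m)) = w := by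
      push_cast; ring
    have e2 : w + ((r : ℤ) : ZMod (2 ^ m)) + (((r : ℤ) + 1 : ℤ) : ZMod (2 ^ m))
        = w + ((2 * r + 1 : ℕ) : ZMod (2 ^ m)) := by
      push_cast; ring
    rw [e1, e2] at hab
    exact hab.symm
  -- iterate the period
  have iter : ∀ k : ℕ, ∀ w : ZMod (2 ^ m),
      ℓ (w + k • ((2 * r + 1 : ℕ) : ZMod (2 ^ m))) = ℓ w := by
    intro k
    induction k with
    | zero => intro w; simp
    | succ k ih =>
      intro w
      have : w + (k + 1) • ((2 * r + 1 : ℕ) : ZMod (2 ^ m))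
          = (w + ((2 * r + 1 : ℕ) : ZMod (2 ^ m))) + k • ((2 * r + 1 : ℕ) : ZMod (2 ^ m)) := by
        rw [succ_nsmul]
        ring
      rw [this, ih, per]
  -- 2r+1 is a unit, so ℓ is constant: contradiction
  have hcop : Nat.Coprime (2 * r + 1) (2 ^ m) :=
    Nat.Coprime.pow_right m (Nat.coprime_two_right.mpr ⟨r, by omega⟩)
  set u : (ZMod (2 ^ m))ˣ := ZMod.unitOfCoprime (2 * r + 1) hcop with hu
  set k0 : ℕ := ((u⁻¹ : (ZMod (2 ^ m))ˣ) : ZMod (2 ^ m)).val with hk0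
  have hk0c : (k0 : ZMod (2 ^ m)) = ((u⁻¹ : (ZMod (2 ^ m))ˣ) : ZMod (2 ^ m)) := by
    rw [hk0, ZMod.natCast_val, ZMod.cast_id]
  have hone : k0 • ((2 * r + 1 : ℕ) : ZMod (2 ^ m)) = 1 := by
    rw [nsmul_eq_mul, hk0c]
    have : ((2 * r + 1 : ℕ) : ZMod (2 ^ m)) = (u : ZMod (2 ^ m)) := by
      rw [hu, ZMod.coe_unitOfCoprime]
    rw [this, ← Units.val_mul, inv_mul_cancel, Units.val_one]
  have : ℓ 1 = ℓ 0 := by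
    have := iter k0 0
    rw [zero_add, hone] at this
    exact this
  have h10 : (1 : ZMod (2 ^ m)) = 0 := ℓ.injective this
  haveI : Fact (1 < 2 ^ m) := ⟨by omega⟩
  exact one_ne_zero h10
end

section
/- Let r and t be odd positive integers with r ≥ 3 and gcd(r, t − 2) = 1. Then the Doob graph G(r,t) does not admit an open XOR-magic labeling: for no n ∈ ℕ is there a bijection ℓ from its vertices to (Z_2)^n such that for every vertex v the sum in (Z_2)^n of ℓ(u) over all neighbors u of v is the zero vector. -/
/-- The Doob graph `G(r,t) = C_{(r-1)t+2}({kt+1 : 0 ≤ k ≤ ⌊(r-1)t/2⌋})`. -/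
def doobGraph (r t : ℕ) : SimpleGraph (ZMod ((r - 1) * t + 2)) :=
  circulant ((r - 1) * t + 2) ((fun k => k * t + 1) '' Set.Iic ((r - 1) * t / 2))

theorem stmt_10 (r t : ℕ) (hro : Odd r) (hr : 3 ≤ r) (hto : Odd t) (ht : 0 < t)
    (hgcd : Nat.gcd r (t - 2) = 1) :
    ¬ ∃ (n : ℕ) (ℓ : ZMod ((r - 1) * t + 2) ≃ (Fin n → ZMod 2)),
        ∀ v, ∑ᶠ u ∈ (doobGraph r t).neighborSet v, ℓ u = 0 := by
  classical
  obtain ⟨b, hb⟩ := hro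
  set m : ℕ := (r - 1) * t + 2 with hm
  rintro ⟨n, ℓ, hℓ⟩
  have hb1 : 1 ≤ b := by omega
  have hbt : 1 ≤ b * t := Nat.one_le_iff_ne_zero.mpr (by positivity)
  have hm2s : m = 2 * (b * t + 1) := by
    have h1 : r - 1 = 2 * b := by omega
    rw [hm, h1]; ring
  have hm4 : 4 ≤ m := by omega
  haveI : NeZero m := ⟨by omega⟩
  haveI : Fact (1 < m) := ⟨by omega⟩
  -- cardinality : m = 2 ^ n
  have hcard : m = 2 ^ n := by
    have h1 := Fintype.card_congr ℓ
    simpa [ZMod.card] using h1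
  -- abbreviations
  set G := doobGraph r t with hG
  have hK : (r - 1) * t / 2 = b * t := by
    have h1 : r - 1 = 2 * b := by omega
    rw [h1, mul_assoc]
    exact Nat.mul_div_cancel_left _ (by norm_num)
  -- adjacency characterization
  have hadj : ∀ v u : ZMod m,
      G.Adj v u ↔ v ≠ u ∧
        ((∃ k ≤ b * t, v - u = ((k * t + 1 : ℕ) : ZMod m)) ∨
         (∃ k ≤ b * t, u - v = ((k * t + 1 : ℕ) : ZMod m))) := by
    intro v u
    rw [hG]
    show (circulant m _).Adj v u ↔ _
    rw [circulant, SimpleGraph.fromRel_adj]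
    constructor
    · rintro ⟨hne, h | h⟩
      · obtain ⟨s, ⟨k, hk, rfl⟩, hs⟩ := h
        exact ⟨hne, Or.inl ⟨k, by rwa [hK] at hk, hs⟩⟩
      · obtain ⟨s, ⟨k, hk, rfl⟩, hs⟩ := h
        exact ⟨hne, Or.inr ⟨k, by rwa [hK] at hk, hs⟩⟩
    · rintro ⟨hne, h | h⟩
      · obtain ⟨k, hk, hs⟩ := h
        exact ⟨hne, Or.inl ⟨k * t + 1, ⟨k, by rwa [hK], rfl⟩, hs⟩⟩
      · obtain ⟨k, hk, hs⟩ := h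
        exact ⟨hne, Or.inr ⟨k * t + 1, ⟨k, by rwa [hK], rfl⟩, hs⟩⟩
  -- the neighbour set of 0 as a finset
  set D : Finset (ZMod m) := Finset.univ.filter (fun d => G.Adj 0 d) with hDdef
  have hD : ∀ d, d ∈ D ↔ G.Adj 0 d := by
    intro d; rw [hDdef]; simp
  have hD0 : ∀ d ∈ D, d ≠ 0 := by
    intro d hd
    have := (hD d).mp hd
    exact fun h => ((hadj 0 d).mp this).1 h.symm
  have hnegD : ∀ d ∈ D, -d ∈ D := by
    intro d hd
    rw [hD] at hd ⊢
    rw [hadj] at hd ⊢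
    obtain ⟨hne, h⟩ := hd
    refine ⟨fun h0 => hne (by simpa using congrArg Neg.neg h0), ?_⟩
    rcases h with h | h
    · exact Or.inr (by simpa [zero_sub, sub_zero] using h)
    · exact Or.inl (by simpa [zero_sub, sub_zero] using h)
  -- translation invariance of adjacency
  have htrans : ∀ v u : ZMod m, G.Adj v u ↔ (u - v) ∈ D := by
    intro v u
    rw [hD, hadj, hadj]
    constructor
    · rintro ⟨hne, h⟩
      refine ⟨fun h0 => hne (sub_eq_zero.mp h0.symm).symm, ?_⟩
      rcases h with h | h
      · exact Or.inl (by rw [zero_sub, neg_sub]; exact h)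
      · exact Or.inr (by rw [sub_zero]; exact h)
    · rintro ⟨hne, h⟩
      refine ⟨fun h0 => hne ((sub_eq_zero.mpr h0.symm).symm), ?_⟩
      rcases h with h | h
      · exact Or.inl (by rw [zero_sub, neg_sub] at h; exact h)
      · exact Or.inr (by rw [sub_zero] at h; exact h)
  -- the special element s0 = m/2
  set s0n : ℕ := b * t + 1 with hs0n
  set s0 : ZMod m := (s0n : ZMod m) with hs0
  have hs0ne : s0 ≠ 0 := by
    rw [hs0, Ne, ZMod.natCast_eq_zero_iff]
    intro hdvd
    have := Nat.le_of_dvd (by omega) hdvd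
    omega
  have h2s0 : s0 + s0 = 0 := by
    rw [hs0, ← Nat.cast_add]
    have : s0n + s0n = m := by omega
    rw [this, ZMod.natCast_self]
  have hs0D : s0 ∈ D := by
    rw [hD, hadj]
    refine ⟨fun h => hs0ne h.symm, Or.inr ⟨b, Nat.le_mul_of_pos_right b ht, ?_⟩⟩
    rw [sub_zero, hs0, hs0n]
  -- 2-torsion elements
  have h2tor : ∀ d : ZMod m, d + d = 0 → d = 0 ∨ d = s0 := by
    intro d hd
    have hdval : ((d.val : ℕ) : ZMod m) = d := ZMod.natCast_zmod_val d
    have h1 : ((d.val + d.val : ℕ) : ZMod m) = 0 := by push_cast [hdval]; exact hd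
    have h2 : m ∣ d.val + d.val := (ZMod.natCast_eq_zero_iff _ _).mp h1
    have h3 : s0n ∣ d.val := by
      obtain ⟨c, hc⟩ := h2
      have hc' : d.val + d.val = 2 * (s0n * c) := by rw [hc, hm2s]; ring
      exact ⟨c, by omega⟩
    have h4 : d.val < m := ZMod.val_lt d
    obtain ⟨c, hc⟩ := h3
    have hc2 : c ≤ 1 := by
      by_contra hcge
      have h5 : s0n * 2 ≤ s0n * c := Nat.mul_le_mul_left _ (by omega)
      omega
    interval_cases c
    · left; rw [← hdval, hc]; simp
    · right; rw [← hdval, hc, mul_one, hs0]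
  -- parity of |D| : sum of ones over D is 1 in ZMod 2
  have hpar : ∑ _d ∈ D, (1 : ZMod 2) = 1 := by
    rw [← Finset.sum_erase_add D _ hs0D]
    have hz : ∑ _d ∈ D.erase s0, (1 : ZMod 2) = 0 := by
      refine Finset.sum_involution (fun a _ => -a) (fun a _ => by decide) ?_ ?_ ?_
      · intro a ha _
        intro h
        have h2 : a + a = 0 := by rw [← neg_eq_iff_add_eq_zero]; exact h
        rcases h2tor a h2 with h0 | h0
        · exact hD0 a (Finset.mem_of_mem_erase ha) h0
        · exact (Finset.ne_of_mem_erase ha) h0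
      · intro a ha
        rw [Finset.mem_erase]
        refine ⟨?_, hnegD a (Finset.mem_of_mem_erase ha)⟩
        intro h
        have h' : -a = s0 := h
        apply Finset.ne_of_mem_erase ha
        have hns0 : -s0 = s0 := neg_eq_of_add_eq_zero_left h2s0
        rw [← neg_neg a, h', hns0]
      · intro a _
        show - -a = a
        exact neg_neg a
    rw [hz, zero_add]
  -- set up the shift operator
  have hn0 : n ≠ 0 := by
    rintro rfl
    rw [pow_zero] at hcard
    omega
  set V := ZMod m → (Fin n → ZMod 2) with hV
  let σ : Module.End (ZMod 2) V :=
    { toFun := fun f v => f (v + 1)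
      map_add' := fun f g => rfl
      map_smul' := fun c f => rfl }
  have hσ : ∀ (f : V) (v : ZMod m), σ f v = f (v + 1) := fun f v => rfl
  have hpow : ∀ (k : ℕ) (f : V) (v : ZMod m), (σ ^ k) f v = f (v + (k : ZMod m)) := by
    intro k
    induction k with
    | zero => intro f v; simp
    | succ k ih =>
      intro f v
      rw [pow_succ]
      have h1 : ((σ ^ k) * σ) f v = (σ ^ k) (σ f) v := rfl
      rw [h1, ih, hσ]
      congr 1
      push_cast
      ring
  have hσm : σ ^ m = 1 := by
    apply LinearMap.ext
    intro f
    funext v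
    rw [hpow]
    simp
  -- characteristic two facts
  have h2E : ∀ x : Module.End (ZMod 2) V, x + x = 0 := by
    intro x
    have h1 : x + x = (2 : ZMod 2) • x := (two_smul (ZMod 2) x).symm
    rw [h1]
    have h2 : (2 : ZMod 2) = 0 := by decide
    rw [h2, zero_smul]
  have h2V : ∀ x : V, x + x = 0 := by
    intro x
    have h1 : x + x = (2 : ZMod 2) • x := (two_smul (ZMod 2) x).symm
    rw [h1]
    have h2 : (2 : ZMod 2) = 0 := by decide
    rw [h2, zero_smul]
  -- N = σ - 1 is nilpotent
  set N : Module.End (ZMod 2) V := σ - 1 with hNdef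
  have hsq : ∀ x : Module.End (ZMod 2) V, (x - 1) ^ 2 = x ^ 2 - 1 := by
    intro x
    calc (x - 1) ^ 2 = x * x - x - (x - 1) := by
          rw [pow_two, mul_sub, sub_mul, one_mul, mul_one]
      _ = x ^ 2 - (x + x) + 1 := by rw [← pow_two]; abel
      _ = x ^ 2 + 1 := by rw [h2E x, sub_zero]
      _ = x ^ 2 - 1 := by
          rw [sub_eq_add_neg, neg_eq_of_add_eq_zero_left (h2E 1)]
  have hNpow : ∀ k : ℕ, N ^ (2 ^ k) = σ ^ (2 ^ k) - 1 := by
    intro k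
    induction k with
    | zero => rw [pow_zero, pow_one, pow_one, hNdef]
    | succ k ih =>
      have h1 : (2 : ℕ) ^ (k + 1) = 2 ^ k * 2 := by ring
      rw [h1, pow_mul, pow_mul, ih, hsq]
  have hNm : N ^ m = 0 := by
    have h1 := hNpow n
    rw [← hcard] at h1
    rw [h1, hσm, sub_self]
  -- the adjacency operator
  set C : Module.End (ZMod 2) V := ∑ d ∈ D, ∑ i ∈ Finset.range d.val, σ ^ i with hCdef
  set A : Module.End (ZMod 2) V := ∑ d ∈ D, σ ^ d.val with hAdef
  have hA1 : A = C * N + 1 := by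
    have h1 : ∀ d ∈ D, σ ^ d.val = (∑ i ∈ Finset.range d.val, σ ^ i) * N + 1 := by
      intro d _
      rw [hNdef, geom_sum_mul, sub_add_cancel]
    rw [hAdef, Finset.sum_congr rfl h1, Finset.sum_add_distrib, ← Finset.sum_mul, ← hCdef]
    congr 1
    have h2 : ∀ _d ∈ D, (1 : Module.End (ZMod 2) V) = (1 : ZMod 2) • 1 := by
      intro _ _; rw [one_smul]
    rw [Finset.sum_congr rfl h2, ← Finset.sum_smul, hpar, one_smul]
  have hcomm : Commute C N := by
    apply Commute.sum_left
    intro d _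
    apply Commute.sum_left
    intro i _
    rw [hNdef]
    exact ((Commute.refl σ).pow_left i).sub_right (Commute.one_right _)
  -- the labeling as element of V
  set ℓ' : V := fun v => ℓ v with hℓ'
  -- the magic condition gives A ℓ' = 0
  have hsum : ∀ v : ZMod m, ∑ d ∈ D, ℓ (v + d) = 0 := by
    intro v
    have hfin : (G.neighborSet v).Finite := Set.toFinite _
    have h1 : ∑ᶠ u ∈ G.neighborSet v, ℓ u = ∑ u ∈ hfin.toFinset, ℓ u :=
      finsum_mem_eq_finite_toFinset_sum _ hfin
    have h2 : ∑ u ∈ hfin.toFinset, ℓ u = ∑ d ∈ D, ℓ (v + d) := by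
      apply Finset.sum_nbij' (i := fun u => u - v) (j := fun d => v + d)
      · intro u hu
        rw [Set.Finite.mem_toFinset, SimpleGraph.mem_neighborSet] at hu
        exact (htrans v u).mp hu
      · intro d hd
        rw [Set.Finite.mem_toFinset, SimpleGraph.mem_neighborSet, htrans]
        simpa using hd
      · intro u _; ring
      · intro d _; ring
      · intro u _; rw [add_sub_cancel]
    rw [← h2, ← h1, hℓ v]
  have hAl : A ℓ' = 0 := by
    funext v
    have h1 : A ℓ' = ∑ d ∈ D, (σ ^ d.val) ℓ' := by
      rw [hAdef]; exact LinearMap.sum_apply _ _ _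
    have h2 : A ℓ' v = ∑ d ∈ D, (σ ^ d.val) ℓ' v := by
      rw [h1]; exact Finset.sum_apply v D _
    rw [h2]
    have h3 : ∀ d ∈ D, (σ ^ d.val) ℓ' v = ℓ (v + d) := by
      intro d _
      rw [hpow, ZMod.natCast_zmod_val, hℓ']
    rw [Finset.sum_congr rfl h3, hsum v]
    rfl
  -- conclude : ℓ' = (C*N)^k ℓ' = 0
  have hB : (C * N) ℓ' = ℓ' := by
    have h1 : (C * N + 1) ℓ' = 0 := by rw [← hA1]; exact hAl
    have h2 : (C * N) ℓ' + ℓ' = 0 := by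
      rw [← h1]; simp [LinearMap.add_apply]
    calc (C * N) ℓ' = (C * N) ℓ' + (ℓ' + ℓ') := by rw [h2V ℓ', add_zero]
      _ = ((C * N) ℓ' + ℓ') + ℓ' := by rw [add_assoc]
      _ = ℓ' := by rw [h2, zero_add]
  have hiter : ∀ k : ℕ, ((C * N) ^ k) ℓ' = ℓ' := by
    intro k
    induction k with
    | zero => simp
    | succ k ih =>
      rw [pow_succ]
      have h1 : ((C * N) ^ k * (C * N)) ℓ' = ((C * N) ^ k) ((C * N) ℓ') := rfl
      rw [h1, hB, ih]
  have hzero : ℓ' = 0 := by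
    have h1 := hiter m
    rw [hcomm.mul_pow, hNm, mul_zero] at h1
    rw [← h1]
    simp
  -- contradiction with injectivity
  have h01 : ℓ (0 : ZMod m) = ℓ (1 : ZMod m) := by
    have e0 : ℓ (0 : ZMod m) = ℓ' 0 := rfl
    have e1 : ℓ (1 : ZMod m) = ℓ' 1 := rfl
    rw [e0, e1, hzero]
    rfl
  have := ℓ.injective h01
  exact one_ne_zero this.symm
end

section
/- For every integer r ≥ 2, the Andrásfai graph And(r) does not admit an open XOR-magic labeling: for no n ∈ ℕ is there a bijection ℓ from its vertices to (Z_2)^n such that for every vertex v the sum in (Z_2)^n of ℓ(u) over all neighbors u of v is the zero vector. -/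
/-- The Andrásfai graph `And(r) = C_{3r-1}({3k+1 : 0 ≤ k ≤ ⌊(3r-3)/2⌋})`. -/
def andrasfai (r : ℕ) : SimpleGraph (ZMod (3 * r - 1)) :=
  circulant (3 * r - 1) ((fun k => 3 * k + 1) '' Set.Iic ((3 * r - 3) / 2))

theorem stmt_12 (r : ℕ) (hr : 2 ≤ r) :
    ¬ ∃ (n : ℕ) (ℓ : ZMod (3 * r - 1) ≃ (Fin n → ZMod 2)),
        ∀ v, ∑ᶠ u ∈ (andrasfai r).neighborSet v, ℓ u = 0 := by
  classical
  set m := 3 * r - 1 with hmdef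
  rintro ⟨n, ℓ, hℓ⟩
  haveI : NeZero m := ⟨by omega⟩
  have hcard : m = 2 ^ n := by
    have h := Fintype.card_congr ℓ
    simpa [ZMod.card, Fintype.card_fun] using h
  have hn : n ≠ 0 := by
    rintro rfl
    simp at hcard; omega
  have h2 : 2 ^ n = 2 * 2 ^ (n - 1) := by
    conv_lhs => rw [show n = (n-1) + 1 by omega]
    ring
  obtain ⟨t, htr, hte⟩ : ∃ t, r = 2 * t + 1 ∧ 2 ^ (n - 1) = 3 * t + 1 := by
    refine ⟨(r - 1) / 2, by omega, by omega⟩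
  have hm6 : m = 6 * t + 2 := by omega
  -- adjacency characterization
  have hAdj : ∀ i j : ZMod m, (andrasfai r).Adj i j ↔
      (i ≠ j ∧ ∃ k ≤ (3 * r - 3) / 2,
        (i - j = ((3 * k + 1 : ℕ) : ZMod m) ∨ j - i = ((3 * k + 1 : ℕ) : ZMod m))) := by
    intro i j
    show (SimpleGraph.fromRel _).Adj i j ↔ _
    rw [SimpleGraph.fromRel_adj]
    simp only [Set.mem_image, Set.mem_Iic]
    constructor
    · rintro ⟨hne, h | h⟩ <;> obtain ⟨s, ⟨k, hk, rfl⟩, hs⟩ := h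
      · exact ⟨hne, k, hk, Or.inl (by exact_mod_cast hs)⟩
      · exact ⟨hne, k, hk, Or.inr (by exact_mod_cast hs)⟩
    · rintro ⟨hne, k, hk, h | h⟩
      · exact ⟨hne, Or.inl ⟨3 * k + 1, ⟨k, hk, rfl⟩, by exact_mod_cast h⟩⟩
      · exact ⟨hne, Or.inr ⟨3 * k + 1, ⟨k, hk, rfl⟩, by exact_mod_cast h⟩⟩
  have h0 : ∀ v u : ZMod m, (andrasfai r).Adj v u ↔ (andrasfai r).Adj 0 (u - v) := by
    intro v u
    rw [hAdj, hAdj]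
    simp only [zero_sub, neg_sub, sub_zero]
    exact and_congr_left' (ne_comm.trans (sub_ne_zero.trans ne_comm)).symm
  set D : Finset (ZMod m) := Finset.univ.filter (fun d => (andrasfai r).Adj 0 d) with hDdef
  have hD : ∀ d, d ∈ D ↔ (andrasfai r).Adj 0 d := by
    intro d; simp [hDdef]
  -- the hypothesis as a sum over D
  have hsum : ∀ v : ZMod m, ∑ d ∈ D, ℓ (v + d) = 0 := by
    intro v
    have h1 := hℓ v
    have h2 : (andrasfai r).neighborSet v = ↑(D.image (fun d => v + d)) := by
      ext u
      simp only [SimpleGraph.mem_neighborSet, Finset.coe_image, Set.mem_image, Finset.mem_coe]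
      constructor
      · intro h
        exact ⟨u - v, (hD _).mpr ((h0 v u).mp h), by ring⟩
      · rintro ⟨d, hd, rfl⟩
        exact (h0 v (v + d)).mpr (by simpa using (hD _).mp hd)
    rw [h2, finsum_mem_coe_finset,
      Finset.sum_image (fun a _ b _ h => by exact add_left_cancel h)] at h1
    exact h1
  -- basic facts about D
  have hDneg : ∀ d, d ∈ D → -d ∈ D := by
    intro d hd
    rw [hD, hAdj] at hd ⊢
    obtain ⟨hne, k, hk, h⟩ := hd
    refine ⟨fun h' => hne (neg_eq_zero.mp h'.symm).symm, k, hk, ?_⟩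
    simp only [zero_sub, sub_zero, neg_neg] at h ⊢
    tauto
  have hzero : (0 : ZMod m) ∉ D := by
    rw [hD, hAdj]; rintro ⟨h, -⟩; exact h rfl
  have hhalf_mem : ((3 * t + 1 : ℕ) : ZMod m) ∈ D := by
    rw [hD, hAdj]
    refine ⟨?_, t, by omega, Or.inr (by rw [sub_zero])⟩
    intro h
    rw [eq_comm, ZMod.natCast_eq_zero_iff] at h
    have := Nat.le_of_dvd (by omega) h
    omega
  have hhalf_neg : -((3 * t + 1 : ℕ) : ZMod m) = ((3 * t + 1 : ℕ) : ZMod m) := by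
    rw [neg_eq_iff_add_eq_zero, ← Nat.cast_add]
    have : (3 * t + 1) + (3 * t + 1) = m := by omega
    rw [this, ZMod.natCast_self]
  have hfix : ∀ d : ZMod m, -d = d → d = 0 ∨ d = ((3 * t + 1 : ℕ) : ZMod m) := by
    intro d h
    have hval : d.val < m := ZMod.val_lt d
    have hdd : ((d.val + d.val : ℕ) : ZMod m) = 0 := by
      push_cast
      rw [ZMod.natCast_rightInverse d]
      nth_rewrite 1 [← h]
      exact neg_add_cancel d
    rw [ZMod.natCast_eq_zero_iff] at hdd
    obtain ⟨c, hc⟩ := hdd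
    have : d.val = 0 ∨ d.val = 3 * t + 1 := by
      rcases Nat.lt_or_ge c 2 with h2 | h2
      · interval_cases c <;> omega
      · nlinarith
    rcases this with h' | h'
    · left
      rw [← ZMod.natCast_rightInverse d, h']; simp
    · right
      rw [← ZMod.natCast_rightInverse d, h']
  -- parity of D
  have hparity : ∑ _d ∈ D, (1 : ZMod 2) = 1 := by
    rw [← Finset.insert_erase hhalf_mem,
      Finset.sum_insert (Finset.notMem_erase _ _)]
    have hz : ∑ _d ∈ D.erase ((3 * t + 1 : ℕ) : ZMod m), (1 : ZMod 2) = 0 := by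
      refine Finset.sum_involution (fun d _ => -d) (fun a _ => by decide)
        (fun a ha _ he => ?_) (fun a ha => ?_) (fun a _ => neg_neg a)
      · rcases hfix a (show -a = _ from he) with h' | h'
        · exact hzero (h' ▸ Finset.mem_of_mem_erase ha)
        · exact Finset.ne_of_mem_erase ha h'
      · refine Finset.mem_erase.mpr ⟨?_, hDneg _ (Finset.mem_of_mem_erase ha)⟩
        intro he
        apply Finset.ne_of_mem_erase ha
        have he' : -a = ((3 * t + 1 : ℕ) : ZMod m) := he
        rw [← neg_neg a, he', hhalf_neg]
    rw [hz, add_zero]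
  have hparity' : ((D.card : ℕ) : ZMod 2) = 1 := by
    rw [Finset.card_eq_sum_ones, Nat.cast_sum]
    simpa using hparity
  -- the group algebra
  haveI : CharP (AddMonoidAlgebra (ZMod 2) (ZMod m)) 2 :=
    charP_of_injective_ringHom
      (R := ZMod 2) (f := AddMonoidAlgebra.singleZeroRingHom)
      (AddMonoidAlgebra.single_right_injective (m := 0)) 2
  haveI : Fact (Nat.Prime 2) := ⟨Nat.prime_two⟩
  set F : AddMonoidAlgebra (ZMod 2) (ZMod m) :=
    ∑ d ∈ D, AddMonoidAlgebra.single d 1 with hFdef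
  have hF : F ^ 2 ^ n = 1 := by
    rw [hFdef, sum_pow_char_pow]
    have heach : ∀ d ∈ D,
        (AddMonoidAlgebra.single d (1 : ZMod 2)) ^ 2 ^ n = AddMonoidAlgebra.single 0 1 := by
      intro d _
      rw [AddMonoidAlgebra.single_pow, one_pow]
      congr 1
      rw [nsmul_eq_mul]
      have hz : ((2 ^ n : ℕ) : ZMod m) = 0 := by
        rw [← hcard]; exact ZMod.natCast_self m
      rw [hz, zero_mul]
    rw [Finset.sum_congr rfl heach, Finset.sum_const, nsmul_eq_mul,
      ← AddMonoidAlgebra.one_def, mul_one]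
    rw [show ((D.card : ℕ) : AddMonoidAlgebra (ZMod 2) (ZMod m))
        = AddMonoidAlgebra.singleZeroRingHom ((D.card : ℕ) : ZMod 2) from
        (map_natCast _ _).symm]
    rw [hparity', map_one]
  -- each coordinate function, as an element of the group algebra, is killed by F
  have hmul : ∀ i : Fin n,
      F * (∑ v : ZMod m, AddMonoidAlgebra.single v (ℓ v i)) = 0 := by
    intro i
    rw [hFdef, Finset.sum_mul_sum]
    have hstep : ∀ d ∈ D,
        ∑ v : ZMod m, AddMonoidAlgebra.single d (1 : ZMod 2)
            * AddMonoidAlgebra.single v (ℓ v i)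
        = ∑ w : ZMod m, AddMonoidAlgebra.single w (ℓ (w - d) i) := by
      intro d _
      refine Fintype.sum_equiv (Equiv.addLeft d) _ _ ?_
      intro v
      rw [AddMonoidAlgebra.single_mul_single, one_mul]
      simp [Equiv.addLeft, add_sub_cancel_left]
    rw [Finset.sum_congr rfl hstep, Finset.sum_comm]
    have hinner : ∀ w : ZMod m,
        ∑ d ∈ D, AddMonoidAlgebra.single w (ℓ (w - d) i)
          = AddMonoidAlgebra.single w (0 : ZMod 2) := by
      intro w
      have hmap : ∑ d ∈ D, AddMonoidAlgebra.single w (ℓ (w - d) i)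
          = AddMonoidAlgebra.single w (∑ d ∈ D, ℓ (w - d) i) :=
        (map_sum (AddMonoidAlgebra.singleAddHom w) (fun d => ℓ (w - d) i) D).symm
      rw [hmap]
      congr 1
      have hre : ∑ d ∈ D, ℓ (w - d) i = ∑ d ∈ D, ℓ (w + d) i := by
        refine Finset.sum_nbij' (fun d => -d) (fun d => -d) (fun a ha => hDneg _ ha)
          (fun a ha => hDneg _ ha) (fun a _ => neg_neg a) (fun a _ => neg_neg a) ?_
        intro a _
        simp [sub_eq_add_neg]
      rw [hre, ← Finset.sum_apply]
      rw [hsum w]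
      rfl
    rw [Finset.sum_congr rfl (fun w _ => hinner w)]
    simp
  -- conclude each coordinate is zero
  have hL0 : ∀ (i : Fin n) (v : ZMod m), ℓ v i = 0 := by
    intro i v
    have h1 : (∑ v : ZMod m, AddMonoidAlgebra.single v (ℓ v i)) = 0 := by
      have e1 : (∑ v : ZMod m, AddMonoidAlgebra.single v (ℓ v i))
          = F ^ (2 ^ n - 1) * (F * ∑ v : ZMod m, AddMonoidAlgebra.single v (ℓ v i)) := by
        rw [← mul_assoc, ← pow_succ, show 2 ^ n - 1 + 1 = 2 ^ n by
          have := Nat.one_le_two_pow (n := n); omega, hF, one_mul]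
      rw [e1, hmul i, mul_zero]
    have h1' : (∑ v : ZMod m, Finsupp.single v (ℓ v i) : ZMod m →₀ ZMod 2) = 0 := by
      have := congrArg AddMonoidAlgebra.coeff h1
      rw [AddMonoidAlgebra.coeff_sum, AddMonoidAlgebra.coeff_zero] at this
      exact this
    have h2 := DFunLike.congr_fun h1' v
    rw [Finsupp.finset_sum_apply] at h2
    rw [Finset.sum_eq_single v (fun w _ hw => Finsupp.single_eq_of_ne' hw)
      (fun h => absurd (Finset.mem_univ v) h), Finsupp.single_eq_same] at h2
    simpa using h2
  have h01 : (0 : ZMod m) = 1 := by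
    apply ℓ.injective
    funext i
    rw [hL0 i 0, hL0 i 1]
  haveI : Fact (1 < m) := ⟨by omega⟩
  exact zero_ne_one h01
end

section
/- For every integer m ≥ 2, the Möbius ladder graph L_{2^m} = C_{2^m}({1, 2^{m−1}}) does not admit an open XOR-magic labeling: there is no bijection ℓ from its vertices to (Z_2)^m such that for every vertex v the sum in (Z_2)^m of ℓ(u) over all neighbors u of v is the zero vector. -/
theorem stmt_13 (m : ℕ) (hm : 2 ≤ m) :
    ¬ ∃ ℓ : ZMod (2 ^ m) ≃ (Fin m → ZMod 2),
        ∀ v, ∑ᶠ u ∈ (circulant (2 ^ m) {1, 2 ^ (m - 1)}).neighborSet v, ℓ u = 0 := by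
  rintro ⟨ℓ, hℓ⟩
  have hp2 : 2 ≤ 2 ^ (m - 1) := by
    calc 2 = 2 ^ 1 := rfl
    _ ≤ 2 ^ (m - 1) := Nat.pow_le_pow_right (by norm_num) (by omega)
  have hnp : 2 ^ m = 2 * 2 ^ (m - 1) := by
    rw [← pow_succ']
    congr 1
    omega
  haveI : NeZero (2 ^ m) := ⟨by positivity⟩
  haveI : Fact (1 < 2 ^ m) := ⟨by omega⟩
  set c : ZMod (2 ^ m) := ((2 ^ (m - 1) : ℕ) : ZMod (2 ^ m)) with hc
  have hcc : c + c = 0 := by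
    rw [hc, ← Nat.cast_add]
    have e : 2 ^ (m - 1) + 2 ^ (m - 1) = 2 ^ m := by omega
    rw [e, ZMod.natCast_self]
  have hc0 : c ≠ 0 := by
    rw [hc, Ne, ZMod.natCast_eq_zero_iff]
    intro h
    have := Nat.le_of_dvd (by positivity) h
    omega
  have h2 : (2 : ZMod (2 ^ m)) ≠ 0 := by
    have : ((2 : ℕ) : ZMod (2 ^ m)) ≠ 0 := by
      rw [Ne, ZMod.natCast_eq_zero_iff]
      intro h
      have := Nat.le_of_dvd (by norm_num) h
      omega
    simpa using this
  have hc1 : c ≠ 1 := by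
    rw [hc]
    intro h
    rw [show (1 : ZMod (2 ^ m)) = ((1 : ℕ) : ZMod (2 ^ m)) by simp, ZMod.natCast_eq_natCast_iff] at h
    have h1 := Nat.ModEq.eq_of_lt_of_lt h (by omega) (by omega)
    omega
  have hcn1 : c + 1 ≠ 0 := by
    rw [hc, show (1 : ZMod (2 ^ m)) = ((1 : ℕ) : ZMod (2 ^ m)) by simp, ← Nat.cast_add,
      Ne, ZMod.natCast_eq_zero_iff]
    intro h
    have := Nat.le_of_dvd (by positivity) h
    omega
  -- the neighbor set
  have hnbr : ∀ v : ZMod (2 ^ m), (circulant (2 ^ m) {1, 2 ^ (m - 1)}).neighborSet v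
      = (↑({v - 1, v + 1, v + c} : Finset (ZMod (2 ^ m))) : Set (ZMod (2 ^ m))) := by
    intro v
    ext u
    simp only [SimpleGraph.mem_neighborSet, circulant, SimpleGraph.fromRel_adj,
      Set.mem_insert_iff, Set.mem_singleton_iff, Finset.coe_insert, Finset.coe_singleton]
    constructor
    · rintro ⟨hne, (⟨s, (rfl | rfl), heq⟩ | ⟨s, (rfl | rfl), heq⟩)⟩
      · left; push_cast at heq; linear_combination -heq
      · right; right; rw [← hc] at heq; linear_combination -heq - hcc
      · right; left; push_cast at heq; linear_combination heq
      · right; right; rw [← hc] at heq; linear_combination heq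
    · rintro (rfl | rfl | rfl)
      · refine ⟨fun h => one_ne_zero (α := ZMod (2 ^ m)) (by linear_combination h), Or.inl ⟨1, Or.inl rfl, by push_cast; ring⟩⟩
      · refine ⟨fun h => one_ne_zero (α := ZMod (2 ^ m)) (by linear_combination -h), Or.inr ⟨1, Or.inl rfl, by push_cast; ring⟩⟩
      · refine ⟨fun h => hc0 (by linear_combination -h), Or.inr ⟨2 ^ (m - 1), Or.inr rfl, by rw [← hc]; ring⟩⟩
  -- the magic sum in explicit form
  have hsum : ∀ v : ZMod (2 ^ m), ℓ (v - 1) + ℓ (v + 1) + ℓ (v + c) = 0 := by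
    intro v
    have h := hℓ v
    rw [hnbr v, finsum_mem_coe_finset] at h
    have d1 : v - 1 ∉ ({v + 1, v + c} : Finset (ZMod (2 ^ m))) := by
      simp only [Finset.mem_insert, Finset.mem_singleton]
      push_neg
      exact ⟨fun h' => h2 (by linear_combination -h'), fun h' => hcn1 (by linear_combination -h')⟩
    have d2 : (v + 1 : ZMod (2 ^ m)) ∉ ({v + c} : Finset (ZMod (2 ^ m))) := by
      simp only [Finset.mem_singleton]
      exact fun h' => hc1 (by linear_combination -h')
    rw [Finset.sum_insert d1, Finset.sum_insert d2, Finset.sum_singleton, ← add_assoc] at h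
    exact h
  -- sum of three consecutive "pair sums" vanishes
  have hsum' : ∀ v : ZMod (2 ^ m), ℓ v + ℓ (v + 2) + ℓ (v + 1 + c) = 0 := by
    intro v
    have h := hsum (v + 1)
    rwa [show v + 1 - 1 = v by ring, show v + 1 + 1 = v + 2 by ring] at h
  have key : ∀ v : ZMod (2 ^ m),
      (ℓ v + ℓ (v + c)) + (ℓ (v + 1) + ℓ (v + 1 + c)) + (ℓ (v + 2) + ℓ (v + 2 + c)) = 0 := by
    intro v
    have h1 := hsum' v
    have h2 := hsum' (v + c)
    rw [show v + c + 1 + c = v + 1 + (c + c) by ring, hcc, add_zero,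
      show v + c + 2 = v + 2 + c by ring] at h2
    linear_combination h1 + h2
  -- period 3
  have hper3 : ∀ v : ZMod (2 ^ m), ℓ (v + 3) + ℓ (v + 3 + c) = ℓ v + ℓ (v + c) := by
    intro v
    have h1 := key v
    have h2 := key (v + 1)
    rw [show v + 1 + 1 = v + 2 by ring, show v + 1 + 2 = v + 3 by ring] at h2
    linear_combination h2 - h1
  have hstep : ∀ (k : ℕ) (v : ZMod (2 ^ m)),
      ℓ (v + ((3 * k : ℕ) : ZMod (2 ^ m))) + ℓ (v + ((3 * k : ℕ) : ZMod (2 ^ m)) + c) = ℓ v + ℓ (v + c) := by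
    intro k
    induction k with
    | zero => intro v; simp
    | succ k ih =>
      intro v
      have e : ((3 * (k + 1) : ℕ) : ZMod (2 ^ m)) = ((3 * k : ℕ) : ZMod (2 ^ m)) + 3 := by push_cast; ring
      rw [e, show v + (((3 * k : ℕ) : ZMod (2 ^ m)) + 3) = v + ((3 * k : ℕ) : ZMod (2 ^ m)) + 3 by ring]
      exact (hper3 _).trans (ih v)
  -- 3 is invertible mod 2^m
  have hcop : Nat.Coprime 3 (2 ^ m) :=
    Nat.Coprime.pow_right m (by norm_num)
  obtain ⟨k, hk⟩ : ∃ k : ℕ, ((3 * k : ℕ) : ZMod (2 ^ m)) = 1 := by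
    refine ⟨((3 : ZMod (2 ^ m))⁻¹).val, ?_⟩
    push_cast
    rw [ZMod.natCast_val, ZMod.cast_id]
    have := ZMod.coe_mul_inv_eq_one 3 hcop
    simpa using this
  have hA1 : ∀ v : ZMod (2 ^ m), ℓ (v + 1) + ℓ (v + 1 + c) = ℓ v + ℓ (v + c) := by
    intro v
    have h := hstep k v
    rwa [hk] at h
  have hxx : ∀ x : Fin m → ZMod 2, x + x = 0 := by
    intro x
    funext i
    have : ∀ a : ZMod 2, a + a = 0 := by decide
    exact this _
  have hA0 : ∀ v : ZMod (2 ^ m), ℓ v + ℓ (v + c) = 0 := by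
    intro v
    have h1 := key v
    have h2 := hA1 v
    have h3 := hA1 (v + 1)
    rw [show v + 1 + 1 = v + 2 by ring] at h3
    linear_combination h1 - 2 * h2 - h3 - hxx (ℓ v) - hxx (ℓ (v + c))
  have : (0 : ZMod (2 ^ m)) = 0 + c := by
    apply ℓ.injective
    linear_combination hA0 0 - hxx (ℓ (0 + c))
  exact hc0 (by linear_combination -this)
end

section
/- For every odd positive integer n, the hypercube graph Q_n does not admit an open XOR-magic labeling: there is no bijection ℓ from its vertices to (Z_2)^n such that for every vertex v the sum in (Z_2)^n of ℓ(u) over all neighbors u of v is the zero vector. -/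
lemma zmod2_add_self : ∀ a : ZMod 2, a + a = 0 := by decide

lemma pi_add_self {n : ℕ} (x : Fin n → ZMod 2) : x + x = 0 := by
  funext i; exact zmod2_add_self (x i)

lemma single_ne_zero' {n : ℕ} (i : Fin n) : (Pi.single i 1 : Fin n → ZMod 2) ≠ 0 := by
  intro h
  have := congrFun h i
  simp at this

lemma single_inj {n : ℕ} (v : Fin n → ZMod 2) :
    Function.Injective (fun i : Fin n => v + Pi.single i 1) := by
  intro i j h
  have h2 : (Pi.single i 1 : Fin n → ZMod 2) = Pi.single j 1 := add_left_cancel h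
  by_contra hne
  have := congrFun h2 i
  rw [Pi.single_eq_same, Pi.single_eq_of_ne hne] at this
  simp at this

/-- The hypercube graph `Q_n` on vertex set `(ZMod 2)^n`: two distinct vertices are
adjacent iff they differ in exactly one coordinate, i.e. iff one is obtained from the
other by adding a standard basis vector. -/
def hypercubeGraph (n : ℕ) : SimpleGraph (Fin n → ZMod 2) :=
  SimpleGraph.fromRel (fun v w => ∃ i, w = v + Pi.single i 1)

lemma neighborSet_eq (n : ℕ) (v : Fin n → ZMod 2) :
    (hypercubeGraph n).neighborSet v = Set.range (fun i : Fin n => v + Pi.single i 1) := by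
  ext w
  simp only [SimpleGraph.mem_neighborSet, hypercubeGraph, SimpleGraph.fromRel_adj,
    Set.mem_range]
  constructor
  · rintro ⟨hne, h | h⟩
    · exact h.imp fun i hi => hi.symm
    · obtain ⟨i, hi⟩ := h
      exact ⟨i, by rw [hi, add_assoc, pi_add_self, add_zero]⟩
  · rintro ⟨i, hi⟩
    refine ⟨?_, Or.inl ⟨i, hi.symm⟩⟩
    intro hvw
    apply single_ne_zero' i
    have h3 : v + Pi.single i 1 = v + 0 := by rw [add_zero, hi, ← hvw]
    exact add_left_cancel h3

lemma odd_nsmul_eq_self {M : Type*} [AddCommMonoid M] {x : M} (hx : x + x = 0) {n : ℕ}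
    (hn : Odd n) : n • x = x := by
  obtain ⟨m, rfl⟩ := hn
  rw [add_nsmul, one_nsmul, mul_comm, mul_nsmul, two_nsmul, ← smul_add, hx, smul_zero, zero_add]

lemma key (n : ℕ) (hn : Odd n) (L : (Fin n → ZMod 2) → (Fin n → ZMod 2))
    (h : ∀ v, ∑ i : Fin n, L (v + (Pi.single i 1 : Fin n → ZMod 2)) = 0) (v : Fin n → ZMod 2) : L v = 0 := by
  classical
  set f : Fin n × Fin n → (Fin n → ZMod 2) :=
    fun p => L (v + Pi.single p.1 1 + Pi.single p.2 1) with hf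
  have hdouble : ∑ p ∈ (Finset.univ : Finset (Fin n)) ×ˢ Finset.univ, f p = 0 := by
    rw [Finset.sum_product]
    simp only [hf]
    exact Finset.sum_eq_zero fun i _ => h (v + Pi.single i 1)
  rw [← Finset.diag_union_offDiag, Finset.sum_union (Finset.disjoint_diag_offDiag _)]
    at hdouble
  have hoff : ∑ p ∈ (Finset.univ : Finset (Fin n)).offDiag, f p = 0 := by
    apply Finset.sum_involution (fun p _ => Prod.swap p)
    · intro a _
      have hsymm : f (Prod.swap a) = f a := by
        simp only [hf, Prod.fst_swap, Prod.snd_swap]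
        rw [add_assoc, add_comm ((Pi.single a.2 1 : Fin n → ZMod 2)), ← add_assoc]
      rw [hsymm, pi_add_self]
    · intro a ha _
      intro hsw
      have h1 := (Finset.mem_offDiag.mp ha).2.2
      have h2 : a.swap.1 = a.1 := congrArg Prod.fst hsw
      rw [Prod.fst_swap] at h2
      exact h1 h2.symm
    · intro a ha
      rw [Finset.mem_offDiag] at ha ⊢
      exact ⟨Finset.mem_univ _, Finset.mem_univ _, fun hh => ha.2.2 hh.symm⟩
    · intro a _; exact Prod.swap_swap a
  have hdiag : ∑ p ∈ (Finset.univ : Finset (Fin n)).diag, f p = L v := by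
    have hc : ∀ p ∈ (Finset.univ : Finset (Fin n)).diag, f p = L v := by
      intro p hp
      rw [Finset.mem_diag] at hp
      simp only [hf]
      rw [← hp.2, add_assoc, pi_add_self, add_zero]
    rw [Finset.sum_congr rfl hc, Finset.sum_const, Finset.diag_card, Finset.card_univ,
      Fintype.card_fin]
    exact odd_nsmul_eq_self (pi_add_self (L v)) hn
  rw [hdiag, hoff, add_zero] at hdouble
  exact hdouble

theorem stmt_14 (n : ℕ) (hn : Odd n) :
    ¬ ∃ ℓ : (Fin n → ZMod 2) ≃ (Fin n → ZMod 2),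
        ∀ v, ∑ᶠ u ∈ (hypercubeGraph n).neighborSet v, ℓ u = 0 := by
  rintro ⟨ℓ, hℓ⟩
  have hsum : ∀ v, ∑ i : Fin n, ℓ (v + (Pi.single i 1 : Fin n → ZMod 2)) = 0 := by
    intro v
    have hv := hℓ v
    rw [neighborSet_eq, finsum_mem_range (single_inj v), finsum_eq_sum_of_fintype] at hv
    exact hv
  have hz := key n hn (⇑ℓ) hsum
  have i0 : Fin n := ⟨0, hn.pos⟩
  have h0 : (0 : Fin n → ZMod 2) = Pi.single i0 1 :=
    ℓ.injective ((hz 0).trans (hz _).symm)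
  exact single_ne_zero' i0 h0.symm
end
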